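/- arXiv:2111.12168 — 9 statements merged into one kernel-verified Lean document; each statement's English description precedes it below -/
import Mathlib

section
/- Let G be a bipartite graph with bipartition (X, Y). If G has no matching covering X, then there exists a non-empty subset X' of X such that the induced subgraph G[X' ∪ N(X')] has a matching covering N(X'). -/
open Set

namespace Paper

variable {V : Type*}

/-- `u` and `v` are adjacent in the underlying graph of the digraph `E`. -/
def Adj (E : V → V → Prop) (u v : V) : Prop := E u v ∨ E v u

/-- A stable set: pairwise non-adjacent vertices. -/
def Stable (E : V → V → Prop) (S : Set V) : Prop :=
  ∀ u ∈ S, ∀ v ∈ S, u ≠ v → ¬ Adj E u v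

/-- A stable set of the subdigraph induced by `W`. -/
def StableOn (E : V → V → Prop) (W S : Set V) : Prop := S ⊆ W ∧ Stable E S

/-- A maximum stable set of the subdigraph induced by `W`. -/
def MaxStableOn (E : V → V → Prop) (W S : Set V) : Prop :=
  StableOn E W S ∧ ∀ T, StableOn E W T → T.ncard ≤ S.ncard

/-- Neighborhood of `S`: vertices outside `S` adjacent to some vertex of `S`. -/
def Nbhd (E : V → V → Prop) (S : Set V) : Set V :=
  {v | v ∉ S ∧ ∃ u ∈ S, Adj E u v}

/-- A (nonempty) directed path, as a list of vertices. -/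
def IsPath (E : V → V → Prop) (p : List V) : Prop := p ≠ [] ∧ p.Chain' E

/-- A path partition of the vertex set `W` into vertex-disjoint directed paths. -/
def PathPartitionOn (E : V → V → Prop) (W : Set V) (P : List (List V)) : Prop :=
  (∀ p ∈ P, IsPath E p) ∧ P.flatten.Nodup ∧ ∀ v, v ∈ P.flatten ↔ v ∈ W

/-- `S` and `P` are orthogonal: each path contains exactly one vertex of `S`. -/
def Orthogonal (S : Set V) (P : List (List V)) : Prop :=
  ∀ p ∈ P, ∃! v, v ∈ p ∧ v ∈ S

/-- An `S`-path partition of `W`. -/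
def SPartOn (E : V → V → Prop) (W S : Set V) (P : List (List V)) : Prop :=
  PathPartitionOn E W P ∧ Orthogonal S P

/-- An `S_BE`-path partition of `W`: orthogonal and every vertex of `S` starts or
ends its path. -/
def BEPartOn (E : V → V → Prop) (W S : Set V) (P : List (List V)) : Prop :=
  SPartOn E W S P ∧ ∀ p ∈ P, ∀ v ∈ p, v ∈ S → p.head? = some v ∨ p.getLast? = some v

/-- The induced subdigraph on `W` satisfies the α-property. -/
def AlphaPropOn (E : V → V → Prop) (W : Set V) : Prop :=
  ∀ S, MaxStableOn E W S → ∃ P, SPartOn E W S P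

/-- The induced subdigraph on `W` satisfies the BE-property. -/
def BEPropOn (E : V → V → Prop) (W : Set V) : Prop :=
  ∀ S, MaxStableOn E W S → ∃ P, BEPartOn E W S P

/-- A matching (w.r.t. a symmetric-or-not adjacency `A`) whose edges go from `X`
to `Y`: pairwise vertex-disjoint edges. -/
def MatchingBetween (A : V → V → Prop) (X Y : Set V) (M : Set (V × V)) : Prop :=
  (∀ e ∈ M, e.1 ∈ X ∧ e.2 ∈ Y ∧ A e.1 e.2) ∧
  (∀ e ∈ M, ∀ f ∈ M, e ≠ f →
    e.1 ≠ f.1 ∧ e.1 ≠ f.2 ∧ e.2 ≠ f.1 ∧ e.2 ≠ f.2)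

/-- The matching `M` covers the set `X`. -/
def Covers (M : Set (V × V)) (X : Set V) : Prop :=
  ∀ x ∈ X, ∃ e ∈ M, e.1 = x ∨ e.2 = x

/-- Arc-locally in-semicomplete digraph. -/
def ArcLocallyInSemicomplete (E : V → V → Prop) : Prop :=
  ∀ u v, E u v → ∀ a b, E a u → E b v → a = b ∨ Adj E a b

/-- `A ↦ B`: every vertex of `A` dominates every vertex of `B`, and no edge from
`B` to `A`. -/
def Domin (E : V → V → Prop) (A B : Set V) : Prop :=
  (∀ a ∈ A, ∀ b ∈ B, E a b) ∧ ∀ a ∈ A, ∀ b ∈ B, ¬ E b a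

/-- `A ⇒ B`: there is no edge from `B` to `A`. -/
def NoBack (E : V → V → Prop) (A B : Set V) : Prop :=
  ∀ a ∈ A, ∀ b ∈ B, ¬ E b a

/-- The induced subdigraph on `W` has bipartite underlying graph. -/
def BipartiteOn (E : V → V → Prop) (W : Set V) : Prop :=
  ∃ A B : Set V, A ∪ B = W ∧ Disjoint A B ∧
    (∀ u ∈ A, ∀ v ∈ A, ¬ Adj E u v) ∧ (∀ u ∈ B, ∀ v ∈ B, ¬ Adj E u v)

/-- There is a directed walk of length `n` from `u` to `v`. -/
def WalkLen (E : V → V → Prop) : ℕ → V → V → Prop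
  | 0, u, v => u = v
  | n+1, u, v => ∃ w, E u w ∧ WalkLen E n w v

/-- The set of vertices at distance exactly `d` from the set `A`. -/
def Nd (E : V → V → Prop) (A : Set V) (d : ℕ) : Set V :=
  {v | (∃ u ∈ A, WalkLen E d u v) ∧ ∀ d' < d, ¬ ∃ u ∈ A, WalkLen E d' u v}

/-- Out-neighborhood of a set: vertices outside `A` dominated by some vertex of `A`. -/
def NplusSet (E : V → V → Prop) (A : Set V) : Set V :=
  {v | v ∉ A ∧ ∃ u ∈ A, E u v}

/-- The induced subdigraph on `W` is the extended cycle `Q[X 0, …, X (k-1)]`. -/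
def ExtCycleOn (E : V → V → Prop) (k : ℕ) (X : ZMod k → Set V) (W : Set V) : Prop :=
  (⋃ i, X i) = W ∧ (∀ i j, i ≠ j → Disjoint (X i) (X j)) ∧
  (∀ i, (X i).Nonempty) ∧ (∀ i, Stable E (X i)) ∧
  (∀ u ∈ W, ∀ v ∈ W, (E u v ↔ ∃ i, u ∈ X i ∧ v ∈ X (i + 1)))

/-- The partition `(V₁,V₂,V₃)` from the structure theorem for arc-locally
in-semicomplete digraphs, with `D[V₂]` an odd extended cycle of length `k ≥ 5`. -/
def StructPartition (E : V → V → Prop) (V1 V2 V3 : Set V)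
    (k : ℕ) (X : ZMod k → Set V) : Prop :=
  V1 ∪ V2 ∪ V3 = Set.univ ∧ Disjoint V1 V2 ∧ Disjoint V1 V3 ∧ Disjoint V2 V3 ∧
  Domin E V1 V2 ∧ NoBack E V1 V3 ∧ NoBack E V2 V3 ∧
  5 ≤ k ∧ Odd k ∧ ExtCycleOn E k X V2 ∧ BipartiteOn E V3

/-- `D` contains an induced blocking odd cycle. -/
def HasInducedBlockingOddCycle (E : V → V → Prop) : Prop :=
  ∃ n : ℕ, Odd n ∧ 3 ≤ n ∧ ∃ f : ZMod n → V, Function.Injective f ∧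
    (∀ i j : ZMod n, Adj E (f i) (f j) ↔ (j = i + 1 ∨ i = j + 1)) ∧
    (∀ i, ¬ E (f i) (f 0)) ∧ (∀ i, ¬ E (f 1) (f i))

/-- Stability number of the induced subdigraph on `W`. -/
noncomputable def alphaOn (E : V → V → Prop) (W : Set V) : ℕ :=
  sSup {n | ∃ S, StableOn E W S ∧ S.ncard = n}

end Paper

/-! If no matching covers `X`, Hall's theorem yields a nonempty `S ⊆ X` with `|N(S)| < |S|`;
take `X'` inclusion-minimal among such sets and `x ∈ X'`. By minimality every subset of
`X' \ {x}` satisfies Hall's condition, so `X' \ {x}` has injective partners, which lie in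
`N(X')` because `X'` is stable. As `|X' \ {x}| ≥ |N(X')|`, the partners exhaust `N(X')`. -/

open Function

namespace Paper

variable {V : Type*}

lemma adj_simpleGraph_adj_iff (G : SimpleGraph V) {u v : V} : Adj G.Adj u v ↔ G.Adj u v :=
  ⟨fun h => h.elim id G.adj_symm, Or.inl⟩

lemma disjoint_nbhd (E : V → V → Prop) (S : Set V) : Disjoint (Nbhd E S) S :=
  Set.disjoint_left.mpr fun _ hv => hv.1

lemma matchingBetween_range {ι : Type*} {E : V → V → Prop} {X Y : Set V}
    (hXY : Disjoint X Y) (e : ι → V × V) (hfst : Injective (Prod.fst ∘ e))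
    (hsnd : Injective (Prod.snd ∘ e)) (he : ∀ i, (e i).1 ∈ X ∧ (e i).2 ∈ Y ∧ E (e i).1 (e i).2) :
    MatchingBetween E X Y (Set.range e) := by
  refine ⟨Set.forall_mem_range.mpr he, ?_⟩
  rintro _ ⟨i, rfl⟩ _ ⟨j, rfl⟩ hij
  have hij : i ≠ j := fun h => hij (congrArg e h)
  exact ⟨hfst.ne hij, fun h => hXY.ne_of_mem (he i).1 (he j).2.1 h,
    fun h => hXY.ne_of_mem (he j).1 (he i).2.1 h.symm, hsnd.ne hij⟩

lemma covers_range_fst {ι : Type*} (e : ι → V × V) :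
    Covers (Set.range e) (Set.range (Prod.fst ∘ e)) := by
  rintro _ ⟨i, rfl⟩
  exact ⟨e i, ⟨i, rfl⟩, Or.inl rfl⟩

end Paper

namespace SimpleGraph

open Paper

variable {V : Type*} (G : SimpleGraph V)

theorem exists_injective_adj_of_hall [Fintype V] {A : Set V}
    (hall : ∀ S ⊆ A, S.ncard ≤ (Nbhd G.Adj S).ncard) :
    ∃ f : A → V, Injective f ∧ ∀ a : A, G.Adj a (f a) := by
  classical
  refine (Fintype.all_card_le_filter_rel_iff_exists_injective fun (a : A) b => G.Adj a b).mp ?_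
  intro s
  have hnbhd : Nbhd G.Adj (Subtype.val '' (s : Set A)) ⊆
      ↑({b | ∃ a ∈ s, G.Adj a b} : Finset V) := by
    rintro v ⟨-, _, ⟨a, ha, rfl⟩, hav⟩
    simp only [Finset.coe_filter, Finset.mem_univ, true_and]
    exact ⟨a, ha, (adj_simpleGraph_adj_iff G).mp hav⟩
  calc s.card = (Subtype.val '' (s : Set A)).ncard := by
        rw [Set.ncard_image_of_injective _ Subtype.val_injective, Set.ncard_coe_finset]
    _ ≤ (Nbhd G.Adj (Subtype.val '' (s : Set A))).ncard :=
        hall _ (Subtype.coe_image_subset A _)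
    _ ≤ _ := by
        rw [← Set.ncard_coe_finset]
        exact Set.ncard_le_ncard hnbhd

def IsHallViolator (S : Set V) : Prop := S.Nonempty ∧ (Nbhd G.Adj S).ncard < S.ncard

variable {G}

theorem exists_hallViolator_subset_of_not_matching [Fintype V] {X Y : Set V}
    (hdisj : Disjoint X Y)
    (hXY : ∀ ⦃u v⦄, u ∈ X → G.Adj u v → v ∈ Y)
    (hno : ¬ ∃ M : Set (V × V), MatchingBetween G.Adj X Y M ∧ Covers M X) :
    ∃ S ⊆ X, G.IsHallViolator S := by
  by_contra! hall
  obtain ⟨f, hf, hadj⟩ := G.exists_injective_adj_of_hall (A := X) fun S hS => by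
    rcases S.eq_empty_or_nonempty with rfl | hne
    · simp
    · exact not_lt.mp fun h => hall S hS ⟨hne, h⟩
  let e (a : X) : V × V := (a, f a)
  refine hno ⟨Set.range e,
    matchingBetween_range hdisj e Subtype.val_injective hf fun a => ⟨a.2, hXY a.2 (hadj a), hadj a⟩,
    fun x hx => covers_range_fst e x ⟨⟨x, hx⟩, rfl⟩⟩

theorem hall_of_minimal_hallViolator {X' : Set V} (hmin : Minimal G.IsHallViolator X')
    {x : V} (hx : x ∈ X') : ∀ S ⊆ X' \ {x}, S.ncard ≤ (Nbhd G.Adj S).ncard := by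
  intro S hS
  rcases S.eq_empty_or_nonempty with rfl | hne
  · simp
  refine not_lt.mp fun h => hmin.not_prop_of_lt ?_ ⟨hne, h⟩
  exact hS.trans_ssubset (Set.sdiff_singleton_ssubset.mpr hx)

theorem exists_matching_nbhd_of_minimal_hallViolator [Fintype V] {X' : Set V}
    (hmin : Minimal G.IsHallViolator X') (hind : ∀ u ∈ X', ∀ v ∈ X', ¬ G.Adj u v) :
    ∃ M : Set (V × V), MatchingBetween G.Adj (Nbhd G.Adj X') X' M ∧
      Covers M (Nbhd G.Adj X') := by
  obtain ⟨x, hx⟩ := hmin.prop.1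
  obtain ⟨f, hf, hadj⟩ := G.exists_injective_adj_of_hall (hall_of_minimal_hallViolator hmin hx)
  have hrange : Set.range f ⊆ Nbhd G.Adj X' := by
    rintro _ ⟨a, rfl⟩
    exact ⟨fun h => hind a a.2.1 (f a) h (hadj a), a, a.2.1, Or.inl (hadj a)⟩
  have hcard : (Nbhd G.Adj X').ncard ≤ (Set.range f).ncard := by
    rw [Set.ncard_range_of_injective hf, Nat.card_coe_set_eq]
    have hdel := Set.ncard_sdiff_singleton_add_one hx
    have hdef := hmin.prop.2
    omega
  have heq := Set.eq_of_subset_of_ncard_le hrange hcard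
  let e (a : ↥(X' \ {x})) : V × V := (f a, a)
  refine ⟨Set.range e, matchingBetween_range (disjoint_nbhd _ _) e hf Subtype.val_injective
    fun a => ⟨hrange ⟨a, rfl⟩, a.2.1, (hadj a).symm⟩, ?_⟩
  rw [← heq]
  exact covers_range_fst e

end SimpleGraph

open Paper in
theorem stmt0_general {V : Type*} [Fintype V] (G : SimpleGraph V) (X Y : Set V)
    (hdisj : Disjoint X Y)
    (hbip : ∀ u v, G.Adj u v → (u ∈ X ∧ v ∈ Y) ∨ (u ∈ Y ∧ v ∈ X))
    (hno : ¬ ∃ M : Set (V × V), MatchingBetween G.Adj X Y M ∧ Covers M X) :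
    ∃ X' : Set V, X' ⊆ X ∧ X'.Nonempty ∧
      ∃ M : Set (V × V), MatchingBetween G.Adj (Nbhd G.Adj X') X' M ∧
        Covers M (Nbhd G.Adj X') := by
  have hXY : ∀ ⦃u v⦄, u ∈ X → G.Adj u v → v ∈ Y := fun u v hu huv =>
    (hbip u v huv).elim And.right fun h => (hdisj.notMem_of_mem_left hu h.1).elim
  obtain ⟨S, hSX, hS⟩ := SimpleGraph.exists_hallViolator_subset_of_not_matching hdisj hXY hno
  obtain ⟨X', hX'S, hmin⟩ := exists_minimal_le_of_wellFoundedLT _ S hS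
  have hX'X : X' ⊆ X := hX'S.trans hSX
  refine ⟨X', hX'X, hmin.prop.1, SimpleGraph.exists_matching_nbhd_of_minimal_hallViolator hmin ?_⟩
  exact fun u hu v hv huv => hdisj.notMem_of_mem_left (hX'X hv) (hXY (hX'X hu) huv)

open Paper in
theorem stmt0 {V : Type*} [Fintype V] (G : SimpleGraph V) (X Y : Set V)
    (hpart : X ∪ Y = Set.univ) (hdisj : Disjoint X Y)
    (hbip : ∀ u v, G.Adj u v → (u ∈ X ∧ v ∈ Y) ∨ (u ∈ Y ∧ v ∈ X))
    (hno : ¬ ∃ M : Set (V × V), MatchingBetween G.Adj X Y M ∧ Covers M X) :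
    ∃ X' : Set V, X' ⊆ X ∧ X'.Nonempty ∧
      ∃ M : Set (V × V), MatchingBetween G.Adj (Nbhd G.Adj X') X' M ∧
        Covers M (Nbhd G.Adj X') :=
  stmt0_general G X Y hdisj hbip hno
end

section
/- Let D be a digraph, S a maximum stable set of D, X a stable set disjoint from S, and Y = N(X) ∩ S. Then there exists a matching between X and Y covering X. -/
open Set

/-! If `X' ⊆ X`, then `(S \ N(X')) ∪ X'` is again stable, so the maximality of `S` gives
`|X'| ≤ |N(X') ∩ S|`. This is Hall's condition for the bipartite graph between `X` and
`N(X) ∩ S`, and Hall's theorem yields the matching. -/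

namespace Paper

variable {V : Type*} {E : V → V → Prop}

theorem stable_sdiff_nbhd_union {S X : Set V} (hS : Stable E S) (hX : Stable E X)
    (hXS : Disjoint X S) : Stable E (S \ Nbhd E X ∪ X) := by
  rintro u (⟨huS, huN⟩ | huX) v (⟨hvS, hvN⟩ | hvX) huv hadj
  · exact hS u huS v hvS huv hadj
  · exact huN ⟨hXS.notMem_of_mem_right huS, v, hvX, hadj.symm⟩
  · exact hvN ⟨hXS.notMem_of_mem_right hvS, u, huX, hadj⟩
  · exact hX u huX v hvX huv hadj

theorem stable_of_subset {X X' : Set V} (hX : Stable E X) (hX' : X' ⊆ X) : Stable E X' :=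
  fun u hu v hv => hX u (hX' hu) v (hX' hv)

theorem ncard_le_ncard_nbhd_inter {W S X : Set V} (hW : W.Finite) (hS : MaxStableOn E W S)
    (hX : Stable E X) (hXW : X ⊆ W) (hXS : Disjoint X S) :
    X.ncard ≤ (Nbhd E X ∩ S).ncard := by
  have hSW : S ⊆ W := hS.1.1
  have hexchange : (S \ Nbhd E X ∪ X).ncard ≤ S.ncard :=
    hS.2 _ ⟨union_subset (sdiff_subset.trans hSW) hXW, stable_sdiff_nbhd_union hS.1.2 hX hXS⟩
  have hsplit : (S \ Nbhd E X ∪ X).ncard = (S \ Nbhd E X).ncard + X.ncard :=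
    ncard_union_eq (hXS.symm.mono_left sdiff_subset) (hW.subset hSW).sdiff (hW.subset hXW)
  have hS_split : (S ∩ Nbhd E X).ncard + (S \ Nbhd E X).ncard = S.ncard :=
    ncard_inter_add_ncard_sdiff_eq_ncard S _ (hW.subset hSW)
  rw [inter_comm]
  omega

theorem exists_injective_adj_mem_of_maxStable [Fintype V] {S X : Set V}
    (hS : MaxStableOn E univ S) (hX : Stable E X) (hXS : Disjoint X S) :
    ∃ f : X → V, Function.Injective f ∧ ∀ x, f x ∈ S ∧ Adj E x (f x) := by
  classical
  refine (Fintype.all_card_le_filter_rel_iff_exists_injective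
    fun (x : X) v => v ∈ S ∧ Adj E x v).1 fun A => ?_
  set X' : Set V := Subtype.val '' (A : Set X)
  have hX'X : X' ⊆ X := Subtype.coe_image_subset _ _
  have hneighbours : (({v | ∃ a ∈ A, v ∈ S ∧ Adj E a v} : Finset V) : Set V) =
      Nbhd E X' ∩ S := by
    ext v
    simp only [Finset.coe_filter, Finset.mem_univ, true_and, Nbhd, mem_inter_iff,
      X', mem_image, Finset.mem_coe]
    constructor
    · rintro ⟨a, ha, hvS, hadj⟩
      exact ⟨⟨fun hvX' => hXS.notMem_of_mem_right hvS (hX'X hvX'), a, ⟨a, ha, rfl⟩, hadj⟩,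
        hvS⟩
    · rintro ⟨⟨-, _, ⟨a, ha, rfl⟩, hadj⟩, hvS⟩
      exact ⟨a, ha, hvS, hadj⟩
  calc A.card = X'.ncard := by
        rw [ncard_image_of_injective _ Subtype.val_injective, ncard_coe_finset]
    _ ≤ (Nbhd E X' ∩ S).ncard :=
      ncard_le_ncard_nbhd_inter finite_univ hS (stable_of_subset hX hX'X) (subset_univ _)
        (hXS.mono_left hX'X)
    _ = _ := by rw [← hneighbours, ncard_coe_finset]

theorem matchingBetween_range_of_injective {A : V → V → Prop} {X Y : Set V}
    (hXY : Disjoint X Y) {f : X → V} (hf : Function.Injective f) (hfY : ∀ x, f x ∈ Y)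
    (hA : ∀ x : X, A x (f x)) :
    MatchingBetween A X Y (range fun x : X => ((x : V), f x)) := by
  refine ⟨?_, ?_⟩
  · rintro _ ⟨x, rfl⟩
    exact ⟨x.2, hfY x, hA x⟩
  · rintro _ ⟨x, rfl⟩ _ ⟨y, rfl⟩ hne
    have hxy : x ≠ y := fun h => hne (by rw [h])
    have hmem_Y (z : X) (v : V) (hv : (z : V) = v) (hvY : v ∈ Y) : False :=
      hXY.notMem_of_mem_left z.2 (hv ▸ hvY)
    exact ⟨Subtype.val_injective.ne hxy, fun h => hmem_Y x _ h (hfY y),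
      fun h => hmem_Y y _ h.symm (hfY x), hf.ne hxy⟩

theorem covers_range (X : Set V) (f : X → V) : Covers (range fun x : X => ((x : V), f x)) X :=
  fun x hx => ⟨(x, f ⟨x, hx⟩), ⟨⟨x, hx⟩, rfl⟩, Or.inl rfl⟩

end Paper

open Paper in
theorem stmt1 {V : Type*} [Fintype V] (E : V → V → Prop) (S X Y : Set V)
    (hS : MaxStableOn E Set.univ S)
    (hX : Stable E X) (hXS : Disjoint X S)
    (hY : Y = Nbhd E X ∩ S) :
    ∃ M, MatchingBetween (Adj E) X Y M ∧ Covers M X := by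
  obtain ⟨f, hf, hfS⟩ := exists_injective_adj_mem_of_maxStable hS hX hXS
  have hfY (x : X) : f x ∈ Y := by
    rw [hY]
    exact ⟨⟨hXS.notMem_of_mem_right (hfS x).1, x, x.2, (hfS x).2⟩, (hfS x).1⟩
  have hXY : Disjoint X Y := hY ▸ hXS.mono_right inter_subset_right
  exact ⟨_, matchingBetween_range_of_injective hXY hf hfY (fun x : X => (hfS x).2),
    covers_range X f⟩
end

section
/- Let G be a bipartite graph with bipartition (X, Y) that has a matching covering X. Then for every proper subset Y' of Y, there exists a matching M covering X such that the restriction of M to G[X' ∪ Y'], where X' = N(Y'), is a maximum matching of G[X' ∪ Y']. -/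
/-
Let `f : X → Y` be a matching covering `X` and `g : S → Y'` a maximum matching of
`G[N(Y') ∪ Y']`, with `S ⊆ N(Y') ⊆ X`. Switching from `f` to `g` on the vertices of `S` that
cannot be reached from `X \ S` by `f`-`g` alternating paths gives a matching of `X` whose image
contains `g(S)`, a one-sided form of the Mendelsohn–Dulmage theorem. Every vertex of `g(S) ⊆ Y'`
is then matched inside `G[N(Y') ∪ Y']`, so the restriction has at least `|g(S)|` edges.
-/

open Set

theorem exists_injOn_eq_or_eq_and_image_subset {α β : Type*} {A B : Set α} (hBA : B ⊆ A)
    {f g : α → β} (hf : InjOn f A) (hg : InjOn g B) :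
    ∃ h : α → β, InjOn h A ∧ (∀ x ∈ A, h x = f x ∨ (x ∈ B ∧ h x = g x)) ∧
      g '' B ⊆ h '' A := by
  classical
  let step : α → α → Prop := fun a b => a ∈ A ∧ b ∈ B ∧ f a = g b
  let T : Set α := {x | ∃ x₀ ∈ A \ B, Relation.ReflTransGen step x₀ x}
  have mem_T_of_step : ∀ a ∈ T, ∀ b, step a b → b ∈ T :=
    fun a ⟨x₀, hx₀, hx₀a⟩ b hab => ⟨x₀, hx₀, hx₀a.tail hab⟩
  have exists_step_of_mem_T : ∀ b ∈ B, b ∈ T → ∃ a ∈ T, step a b := by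
    rintro b hb ⟨x₀, hx₀, hx₀b⟩
    rcases hx₀b.cases_tail with rfl | ⟨a, hx₀a, hab⟩
    · exact absurd hb hx₀.2
    · exact ⟨a, ⟨x₀, hx₀, hx₀a⟩, hab⟩
  have mem_T_of_notMem : ∀ x ∈ A, x ∉ B \ T → x ∈ T := by
    intro x hxA hx
    by_cases hxB : x ∈ B
    · by_contra hxT; exact hx ⟨hxB, hxT⟩
    · exact ⟨x, ⟨hxA, hxB⟩, .refl⟩
  have g_ne_f : ∀ x ∈ B \ T, ∀ x' ∈ A, x' ∉ B \ T → g x ≠ f x' := fun x hx x' hx'A hx' hxx' =>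
    hx.2 (mem_T_of_step x' (mem_T_of_notMem x' hx'A hx') x ⟨hx'A, hx.1, hxx'.symm⟩)
  refine ⟨fun x => if x ∈ B \ T then g x else f x, ?_, ?_, ?_⟩
  · intro x hx x' hx' hxx'
    by_cases h₁ : x ∈ B \ T <;> by_cases h₂ : x' ∈ B \ T <;>
      simp only [h₁, h₂, if_true, if_false] at hxx'
    · exact hg h₁.1 h₂.1 hxx'
    · exact absurd hxx' (g_ne_f x h₁ x' hx' h₂)
    · exact absurd hxx'.symm (g_ne_f x' h₂ x hx h₁)
    · exact hf hx hx' hxx'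
  · intro x _
    by_cases hx : x ∈ B \ T
    · exact .inr ⟨hx.1, if_pos hx⟩
    · exact .inl (if_neg hx)
  · rintro _ ⟨b, hb, rfl⟩
    by_cases hbT : b ∈ T
    · obtain ⟨a, haT, haA, -, hab⟩ := exists_step_of_mem_T b hb hbT
      exact ⟨a, haA, by simp only [if_neg fun h : a ∈ B \ T => h.2 haT, hab]⟩
    · exact ⟨b, hBA hb, if_pos ⟨hb, hbT⟩⟩

namespace Paper

variable {V : Type*}

theorem nbhd_subset_of_bipartite {E : V → V → Prop} {X Y Y' : Set V} (hXY : Disjoint X Y)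
    (hbip : ∀ u v, E u v → (u ∈ X ∧ v ∈ Y) ∨ (u ∈ Y ∧ v ∈ X)) (hY' : Y' ⊆ Y) :
    Nbhd E Y' ⊆ X := by
  rintro v ⟨-, u, hu, huv | hvu⟩
  · rcases hbip u v huv with ⟨huX, -⟩ | ⟨-, hvX⟩
    · exact absurd (hY' hu) (hXY.notMem_of_mem_left huX)
    · exact hvX
  · rcases hbip v u hvu with ⟨hvX, -⟩ | ⟨-, huX⟩
    · exact hvX
    · exact absurd (hY' hu) (hXY.notMem_of_mem_left huX)

namespace MatchingBetween

variable {A : V → V → Prop} {X Y : Set V} {M : Set (V × V)}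

theorem exists_eq_image (hM : MatchingBetween A X Y M) :
    ∃ S ⊆ X, ∃ g : V → V, InjOn g S ∧ (∀ s ∈ S, g s ∈ Y ∧ A s (g s)) ∧
      M = (fun s => (s, g s)) '' S := by
  have hfst : InjOn Prod.fst M := fun e he e' he' h => by
    by_contra hne; exact (hM.2 e he e' he' hne).1 h
  have hsnd : InjOn Prod.snd M := fun e he e' he' h => by
    by_contra hne; exact (hM.2 e he e' he' hne).2.2.2 h
  have hex : ∀ s ∈ Prod.fst '' M, ∃ y, (s, y) ∈ M := by
    rintro _ ⟨e, he, rfl⟩; exact ⟨e.2, he⟩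
  choose! g hg using hex
  have hM_eq : ∀ e ∈ M, (e.1, g e.1) = e := fun e he =>
    hfst (hg e.1 ⟨e, he, rfl⟩) he rfl
  refine ⟨Prod.fst '' M, ?_, g, ?_, ?_, ?_⟩
  · rintro _ ⟨e, he, rfl⟩; exact (hM.1 e he).1
  · intro s hs s' hs' hss'
    exact congrArg Prod.fst (hsnd (hg s hs) (hg s' hs') hss')
  · intro s hs; exact (hM.1 _ (hg s hs)).2
  · ext e
    refine ⟨fun he => ⟨e.1, ⟨e, he, rfl⟩, hM_eq e he⟩, ?_⟩
    rintro ⟨s, hs, rfl⟩; exact hg s hs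

theorem of_image (hXY : Disjoint X Y) {S : Set V} (hSX : S ⊆ X) {g : V → V} (hg : InjOn g S)
    (hgY : ∀ s ∈ S, g s ∈ Y ∧ A s (g s)) : MatchingBetween A X Y ((fun s => (s, g s)) '' S) := by
  refine ⟨?_, ?_⟩
  · rintro _ ⟨s, hs, rfl⟩; exact ⟨hSX hs, hgY s hs⟩
  · rintro _ ⟨s, hs, rfl⟩ _ ⟨s', hs', rfl⟩ hne
    have hss' : s ≠ s' := fun h => hne (h ▸ rfl)
    exact ⟨hss', fun h => hXY.ne_of_mem (hSX hs) (hgY s' hs').1 h,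
      fun h => hXY.ne_of_mem (hSX hs') (hgY s hs).1 h.symm, fun h => hss' (hg hs hs' h)⟩

theorem subset_fst_image_of_covers (hXY : Disjoint X Y) (hM : MatchingBetween A X Y M)
    (hcov : Covers M X) : X ⊆ Prod.fst '' M := by
  intro x hx
  obtain ⟨e, he, rfl | hex⟩ := hcov x hx
  · exact ⟨e, he, rfl⟩
  · exact absurd (hex ▸ (hM.1 e he).2.1) (hXY.notMem_of_mem_left hx)

end MatchingBetween

theorem ncard_image_inter_le_ncard_restrict [Finite V] {A : V → V → Prop} {X Y' : Set V}
    (hXY' : Disjoint X Y') {h : V → V} (hh : ∀ x ∈ X, A x (h x)) :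
    (h '' X ∩ Y').ncard ≤ {e ∈ (fun x => (x, h x)) '' X | e.1 ∈ Nbhd A Y' ∧ e.2 ∈ Y'}.ncard := by
  refine (ncard_le_ncard ?_).trans (ncard_image_le (f := Prod.snd))
  rintro _ ⟨⟨x, hx, rfl⟩, hy⟩
  exact ⟨(x, h x), ⟨⟨x, hx, rfl⟩, ⟨hXY'.notMem_of_mem_left hx, h x, hy, .inr (hh x hx)⟩, hy⟩, rfl⟩

theorem exists_maximum_matchingBetween [Finite V] (A : V → V → Prop) (X Y : Set V) :
    ∃ M, MatchingBetween A X Y M ∧ ∀ M', MatchingBetween A X Y M' → M'.ncard ≤ M.ncard :=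
  Set.exists_max_image {M | MatchingBetween A X Y M} ncard (toFinite _)
    ⟨∅, by simp [MatchingBetween]⟩

end Paper

open Paper in
theorem stmt2_general {V : Type*} [Fintype V] (G : SimpleGraph V) (X Y : Set V)
    (hdisj : Disjoint X Y)
    (hbip : ∀ u v, G.Adj u v → (u ∈ X ∧ v ∈ Y) ∨ (u ∈ Y ∧ v ∈ X))
    (hM0 : ∃ M, MatchingBetween G.Adj X Y M ∧ Covers M X) :
    ∀ Y' : Set V, Y' ⊂ Y →
      ∃ M, MatchingBetween G.Adj X Y M ∧ Covers M X ∧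
        ∀ M'', MatchingBetween G.Adj (Nbhd G.Adj Y') Y' M'' →
          M''.ncard ≤ {e ∈ M | e.1 ∈ Nbhd G.Adj Y' ∧ e.2 ∈ Y'}.ncard := by
  intro Y' hY'
  obtain ⟨M₀, hM₀, hcov⟩ := hM0
  obtain ⟨S₀, -, f, hf, hfY, rfl⟩ := hM₀.exists_eq_image
  have hXS₀ : X ⊆ S₀ := by simpa [image_image] using hM₀.subset_fst_image_of_covers hdisj hcov
  obtain ⟨Ms, hMs, hMs_max⟩ := exists_maximum_matchingBetween G.Adj (Nbhd G.Adj Y') Y'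
  obtain ⟨S, hSN, g, hg, hgY', rfl⟩ := hMs.exists_eq_image
  have hSX : S ⊆ X := hSN.trans (nbhd_subset_of_bipartite hdisj hbip hY'.subset)
  obtain ⟨h, hh, hhfg, hgh⟩ :=
    exists_injOn_eq_or_eq_and_image_subset hSX (hf.mono hXS₀) hg
  have hhY : ∀ x ∈ X, h x ∈ Y ∧ G.Adj x (h x) := by
    intro x hx
    rcases hhfg x hx with hfx | ⟨hxS, hgx⟩
    · exact hfx ▸ hfY x (hXS₀ hx)
    · exact hgx ▸ ⟨hY'.subset (hgY' x hxS).1, (hgY' x hxS).2⟩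
  refine ⟨_, .of_image hdisj subset_rfl hh hhY, fun x hx => ⟨_, ⟨x, hx, rfl⟩, .inl rfl⟩, ?_⟩
  intro M'' hM''
  calc M''.ncard ≤ ((fun s => (s, g s)) '' S).ncard := hMs_max M'' hM''
    _ = (g '' S).ncard := by
      rw [ncard_image_of_injective _ fun _ _ hst => congrArg Prod.fst hst, hg.ncard_image]
    _ ≤ (h '' X ∩ Y').ncard := by
      refine ncard_le_ncard (subset_inter hgh ?_)
      rintro _ ⟨s, hs, rfl⟩
      exact (hgY' s hs).1
    _ ≤ _ := ncard_image_inter_le_ncard_restrict (hdisj.mono_right hY'.subset)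
      fun x hx => (hhY x hx).2

open Paper in
theorem stmt2 {V : Type*} [Fintype V] (G : SimpleGraph V) (X Y : Set V)
    (hpart : X ∪ Y = Set.univ) (hdisj : Disjoint X Y)
    (hbip : ∀ u v, G.Adj u v → (u ∈ X ∧ v ∈ Y) ∨ (u ∈ Y ∧ v ∈ X))
    (hM0 : ∃ M, MatchingBetween G.Adj X Y M ∧ Covers M X) :
    ∀ Y' : Set V, Y' ⊂ Y →
      ∃ M, MatchingBetween G.Adj X Y M ∧ Covers M X ∧
        ∀ M'', MatchingBetween G.Adj (Nbhd G.Adj Y') Y' M'' →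
          M''.ncard ≤ {e ∈ M | e.1 ∈ Nbhd G.Adj Y' ∧ e.2 ∈ Y'}.ncard :=
  stmt2_general G X Y hdisj hbip hM0
end

section
/- Let D be a digraph such that every proper induced subdigraph of D satisfies the BE-property, and let S be a maximum stable set of D. If there exists no matching between S and N(S) covering S, then D has an S_BE-path partition. -/
open Set

/-!
By Hall's theorem some `A ⊆ S` has `|N(A)| < |A|`; take such an `A` of minimum size and `s ∈ A`.
Then `A - s` satisfies Hall's condition, so it is matched into `N(A)`, and the matching covers
`N(A)` because `|N(A)| ≤ |A| - 1`. As `A` has no neighbours outside `X = A ∪ N(A)`, the set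
`S - A` is a maximum stable set of the proper subdigraph `D - X`, which therefore has an
`(S - A)_BE`-path partition. Adding the one-vertex path `s` and one path for each matching edge,
oriented along its arc, gives an `S_BE`-path partition of `D`.
-/

namespace Finset

variable {α : Type*} [DecidableEq α] {t : α → Finset α}

theorem exists_injOn_of_hall {A : Finset α}
    (hA : ∀ B ⊆ A, B.card ≤ (B.biUnion t).card) :
    ∃ F : α → α, Set.InjOn F A ∧ ∀ a ∈ A, F a ∈ t a := by
  have hall : ∀ B : Finset A, B.card ≤ (B.biUnion fun a => t a).card := fun B => by
    simpa [card_image_of_injective _ Subtype.val_injective, image_biUnion]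
      using hA (B.image Subtype.val) (by simp +contextual [subset_iff])
  obtain ⟨f, hf, hft⟩ := (all_card_le_biUnion_card_iff_exists_injective _).1 hall
  refine ⟨fun a => if h : a ∈ A then f ⟨a, h⟩ else a, fun a ha b hb hab => ?_, fun a ha => ?_⟩
  · simp only [mem_coe] at ha hb
    simp only [dif_pos ha, dif_pos hb] at hab
    exact congrArg Subtype.val (hf hab)
  · simpa [ha] using hft ⟨a, ha⟩

/- Take `A` violating Hall's condition with `#A` minimal: for `s ∈ A`, `A.erase s` satisfies it,
and since `#(A.biUnion t) ≤ #A - 1` its matching exhausts `A.biUnion t`. -/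
theorem exists_erase_matched_onto_biUnion {S : Set α}
    (h : ∃ A : Finset α, ↑A ⊆ S ∧ (A.biUnion t).card < A.card) :
    ∃ A : Finset α, ↑A ⊆ S ∧ ∃ s ∈ A, ∃ F : α → α, Set.InjOn F ↑(A.erase s) ∧
      (∀ a ∈ A.erase s, F a ∈ t a) ∧ (A.erase s).image F = A.biUnion t := by
  obtain ⟨A, ⟨hAS, hAt⟩, hmin⟩ := WellFounded.has_min (measure card).wf
    {A : Finset α | (A : Set α) ⊆ S ∧ (A.biUnion t).card < A.card} h
  obtain ⟨s, hs⟩ := card_pos.1 (pos_of_gt hAt)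
  have hall : ∀ B ⊆ A.erase s, B.card ≤ (B.biUnion t).card := fun B hB => by
    by_contra! hBt
    exact hmin B ⟨(coe_subset.2 hB).trans ((coe_subset.2 (A.erase_subset s)).trans hAS),
      hBt⟩ ((card_le_card hB).trans_lt (card_erase_lt_of_mem hs))
  obtain ⟨F, hinj, hFt⟩ := exists_injOn_of_hall hall
  refine ⟨A, hAS, s, hs, F, hinj, hFt, eq_of_subset_of_card_le ?_ ?_⟩
  · exact image_subset_iff.2 fun a ha =>
      mem_biUnion.2 ⟨a, mem_of_mem_erase ha, hFt a ha⟩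
  · rw [card_image_of_injOn hinj, card_erase_of_mem hs]
    omega

end Finset

namespace Paper

variable {V : Type*} {E : V → V → Prop}

theorem Adj.symm {u v : V} (h : Adj E u v) : Adj E v u := Or.symm h

/- For `A ⊆ S`, the paper's `N(A)` is `A.biUnion (nbrOutside E S)`. -/
open Classical in
noncomputable def nbrOutside [Fintype V] (E : V → V → Prop) (S : Set V) (a : V) : Finset V :=
  Finset.univ.filter fun v => v ∉ S ∧ Adj E a v

theorem mem_nbrOutside [Fintype V] {S : Set V} {a v : V} :
    v ∈ nbrOutside E S a ↔ v ∉ S ∧ Adj E a v := by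
  simp [nbrOutside]

theorem matchingBetween_graphOn {A : V → V → Prop} {X Y : Set V} {F : V → V}
    (hF : ∀ a ∈ X, F a ∈ Y ∧ A a (F a)) (hinj : Set.InjOn F X) (hXY : Disjoint X Y) :
    MatchingBetween A X Y {e | e.1 ∈ X ∧ e.2 = F e.1} := by
  refine ⟨fun e ⟨he, hfe⟩ => hfe ▸ ⟨he, hF _ he⟩, ?_⟩
  rintro ⟨a, a'⟩ ⟨ha, ha' : a' = F a⟩ ⟨b, b'⟩ ⟨hb, hb' : b' = F b⟩ hne
  subst ha' hb'
  have hab : a ≠ b := by rintro rfl; exact hne rfl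
  exact ⟨hab, fun h => hXY.ne_of_mem ha (hF b hb).1 h, fun h => hXY.ne_of_mem hb (hF a ha).1 h.symm,
    fun h => hab (hinj ha hb h)⟩

theorem exists_hall_violator_of_not_exists_matching [Fintype V] [DecidableEq V] {S : Set V}
    (hno : ¬ ∃ M, MatchingBetween (Adj E) S (Nbhd E S) M ∧ Covers M S) :
    ∃ A : Finset V, ↑A ⊆ S ∧ (A.biUnion (nbrOutside E S)).card < A.card := by
  classical
  by_contra! hall
  obtain ⟨F, hinj, hF⟩ :=
    Finset.exists_injOn_of_hall (A := S.toFinset) fun B hB => hall B (by simpa using hB)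
  refine hno ⟨_, matchingBetween_graphOn (fun a ha => ?_) (by simpa using hinj) ?_,
    fun a ha => ⟨(a, F a), ⟨ha, rfl⟩, Or.inl rfl⟩⟩
  · obtain ⟨hFS, hadj⟩ := mem_nbrOutside.1 (hF a (by simpa using ha))
    exact ⟨⟨hFS, a, ha, hadj⟩, hadj⟩
  · exact Set.disjoint_left.2 fun v hv hvN => hvN.1 hv

theorem not_adj_outside_union_biUnion_nbrOutside [Fintype V] [DecidableEq V] {S : Set V}
    (hS : Stable E S) (A : Finset V) :
    ∀ a ∈ S ∩ (↑A ∪ ↑(A.biUnion (nbrOutside E S))),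
      ∀ w ∉ (↑A ∪ ↑(A.biUnion (nbrOutside E S)) : Set V), ¬ Adj E a w := by
  rintro a ⟨haS, ha | ha⟩ w hw hadj
  · by_cases hwS : w ∈ S
    · exact hS a haS w hwS (fun h => hw (Or.inl (h ▸ ha))) hadj
    · exact hw (Or.inr (Finset.mem_biUnion.2 ⟨a, ha, mem_nbrOutside.2 ⟨hwS, hadj⟩⟩))
  · obtain ⟨b, -, hab⟩ := Finset.mem_biUnion.1 ha
    exact (mem_nbrOutside.1 hab).1 haS

/- A larger stable set of `D - X` could be completed by `S ∩ X`. -/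
theorem maxStableOn_compl_diff [Finite V] {S X : Set V} (hS : MaxStableOn E univ S)
    (hX : ∀ a ∈ S ∩ X, ∀ w ∉ X, ¬ Adj E a w) : MaxStableOn E Xᶜ (S \ X) := by
  refine ⟨⟨fun v hv => hv.2, fun u hu v hv => hS.1.2 u hu.1 v hv.1⟩, fun T hT => ?_⟩
  have hstab : StableOn E univ (T ∪ S ∩ X) := by
    refine ⟨subset_univ _, ?_⟩
    rintro u (hu | hu) v (hv | hv) huv
    · exact hT.2 u hu v hv huv
    · exact fun h => hX v hv u (hT.1 hu) h.symm
    · exact hX u hu v (hT.1 hv)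
    · exact hS.1.2 u hu.1 v hv.1 huv
  have hdisj : Disjoint T (S ∩ X) := Set.disjoint_left.2 fun v hv hv' => hT.1 hv hv'.2
  have hcard := hS.2 _ hstab
  rw [ncard_union_eq hdisj, ← ncard_inter_add_ncard_sdiff_eq_ncard S X] at hcard
  omega

section PathPartition

variable {W W' S : Set V} {P Q : List (List V)}

theorem bePartOn_nil : BEPartOn E ∅ S [] := by
  simp [BEPartOn, SPartOn, PathPartitionOn, Orthogonal]

theorem bePartOn_singleton {v : V} (hv : v ∈ S) : BEPartOn E {v} S [[v]] := by
  have hpath : IsPath E [v] := ⟨List.cons_ne_nil _ _, List.isChain_singleton v⟩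
  have huniq : ∃! x, x = v ∧ x ∈ S := ⟨v, ⟨rfl, hv⟩, fun _ hx => hx.1⟩
  simp only [BEPartOn, SPartOn, PathPartitionOn, Orthogonal]
  simp [hpath, hv, huniq]

theorem exists_bePartOn_pair {b c : V} (hb : b ∈ S) (hc : c ∉ S) (hbc : Adj E b c) :
    ∃ P, BEPartOn E {b, c} S P := by
  have hne : b ≠ c := fun h => hc (h ▸ hb)
  have huniq : ∃! v, (v = b ∨ v = c) ∧ v ∈ S :=
    ⟨b, ⟨Or.inl rfl, hb⟩, by rintro v ⟨rfl | rfl, hv⟩ <;> first | rfl | exact absurd hv hc⟩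
  rcases hbc with h | h
  · have hpath : IsPath E [b, c] := ⟨List.cons_ne_nil _ _, List.isChain_pair.2 h⟩
    refine ⟨[[b, c]], ?_⟩
    simp only [BEPartOn, SPartOn, PathPartitionOn, Orthogonal]
    simp [hpath, hb, hc, hne, huniq]
  · have hpath : IsPath E [c, b] := ⟨List.cons_ne_nil _ _, List.isChain_pair.2 h⟩
    refine ⟨[[c, b]], ?_⟩
    simp only [BEPartOn, SPartOn, PathPartitionOn, Orthogonal]
    simp [hpath, hb, hc, hne, hne.symm, or_comm, huniq]

theorem BEPartOn.append (hP : BEPartOn E W S P) (hQ : BEPartOn E W' S Q) (hWW' : Disjoint W W') :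
    BEPartOn E (W ∪ W') S (P ++ Q) := by
  obtain ⟨⟨⟨hPpath, hPnd, hPcov⟩, hPorth⟩, hPend⟩ := hP
  obtain ⟨⟨⟨hQpath, hQnd, hQcov⟩, hQorth⟩, hQend⟩ := hQ
  refine ⟨⟨⟨fun p hp => ?_, ?_, fun v => ?_⟩, fun p hp => ?_⟩, fun p hp => ?_⟩
  · exact (List.mem_append.1 hp).elim (hPpath p) (hQpath p)
  · rw [List.flatten_append]
    exact hPnd.append hQnd fun v hvP hvQ => hWW'.ne_of_mem ((hPcov v).1 hvP) ((hQcov v).1 hvQ) rfl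
  · simp [hPcov, hQcov]
  · exact (List.mem_append.1 hp).elim (hPorth p) (hQorth p)
  · exact (List.mem_append.1 hp).elim (hPend p) (hQend p)

theorem BEPartOn.of_diff_compl {X : Set V} (hP : BEPartOn E Xᶜ (S \ X) P) :
    BEPartOn E Xᶜ S P := by
  obtain ⟨⟨⟨hpath, hnd, hcov⟩, horth⟩, hend⟩ := hP
  have hX : ∀ p ∈ P, ∀ v ∈ p, v ∉ X := fun p hp v hv =>
    (hcov v).1 (List.mem_flatten.2 ⟨p, hp, hv⟩)
  refine ⟨⟨⟨hpath, hnd, hcov⟩, fun p hp => ?_⟩, fun p hp v hv hvS => hend p hp v hv ⟨hvS, hX p hp v hv⟩⟩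
  obtain ⟨v, ⟨hvp, hvS⟩, huniq⟩ := horth p hp
  exact ⟨v, ⟨hvp, hvS.1⟩, fun y hy => huniq y ⟨hy.1, hy.2, hX p hp y hy.1⟩⟩

theorem exists_bePartOn_of_injOn [DecidableEq V] {F : V → V} (B : Finset V) (hB : ↑B ⊆ S)
    (hF : ∀ b ∈ B, F b ∉ S ∧ Adj E b (F b)) (hinj : Set.InjOn F B) :
    ∃ P, BEPartOn E (↑B ∪ F '' ↑B) S P := by
  induction B using Finset.induction_on with
  | empty => exact ⟨[], by simpa using bePartOn_nil⟩
  | insert b B hbB ih =>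
    simp only [Finset.coe_insert, insert_subset_iff] at hB hinj
    obtain ⟨P, hP⟩ := ih hB.2 (fun c hc => hF c (Finset.mem_insert_of_mem hc))
      (hinj.mono (subset_insert _ _))
    obtain ⟨hFb, hadj⟩ := hF b (Finset.mem_insert_self b B)
    obtain ⟨Q, hQ⟩ := exists_bePartOn_pair hB.1 hFb hadj
    have hdisj : Disjoint {b, F b} (↑B ∪ F '' ↑B) := by
      rw [disjoint_insert_left, disjoint_singleton_left]
      refine ⟨fun hb => ?_, fun hFb' => ?_⟩
      · obtain hb | ⟨c, hc, hcb⟩ := hb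
        · exact hbB hb
        · exact (hF c (Finset.mem_insert_of_mem hc)).1 (hcb ▸ hB.1)
      · obtain hFb' | ⟨c, hc, hcb⟩ := hFb'
        · exact hFb (hB.2 hFb')
        · exact hbB (hinj (mem_insert _ _) (mem_insert_of_mem _ hc) hcb.symm ▸ hc)
    refine ⟨Q ++ P, ?_⟩
    convert hQ.append hP hdisj using 1
    ext v
    simp only [Finset.coe_insert, image_insert_eq, mem_union, mem_insert_iff]
    tauto

end PathPartition

end Paper

open Paper in
theorem stmt3 {V : Type*} [Fintype V] (E : V → V → Prop) (S : Set V)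
    (hind : ∀ W : Set V, W ≠ Set.univ → BEPropOn E W)
    (hS : MaxStableOn E Set.univ S)
    (hno : ¬ ∃ M, MatchingBetween (Adj E) S (Nbhd E S) M ∧ Covers M S) :
    ∃ P, BEPartOn E Set.univ S P := by
  classical
  obtain ⟨A, hAS, s, hs, F, hinj, hFt, himage⟩ :=
    Finset.exists_erase_matched_onto_biUnion (exists_hall_violator_of_not_exists_matching hno)
  have hF : ∀ b ∈ A.erase s, F b ∉ S ∧ Adj E b (F b) := fun b hb => mem_nbrOutside.1 (hFt b hb)
  set X : Set V := ↑A ∪ ↑(A.biUnion (nbrOutside E S))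
  have hX : X = {s} ∪ (↑(A.erase s) ∪ F '' ↑(A.erase s)) := by
    rw [← Finset.coe_image, himage, ← union_assoc, ← insert_eq, ← Finset.coe_insert,
      Finset.insert_erase hs]
  obtain ⟨P, hP⟩ := hind Xᶜ (compl_ne_univ.2 ⟨s, Or.inl hs⟩) (S \ X)
    (maxStableOn_compl_diff hS (not_adj_outside_union_biUnion_nbrOutside hS.1.2 A))
  obtain ⟨Q, hQ⟩ := exists_bePartOn_of_injOn (A.erase s)
    ((Finset.coe_subset.2 (A.erase_subset s)).trans hAS) hF hinj
  have hsQ : Disjoint {s} (↑(A.erase s) ∪ F '' ↑(A.erase s)) := by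
    refine disjoint_singleton_left.2 fun h => h.elim (Finset.notMem_erase s A) ?_
    rintro ⟨b, hb, hbs⟩
    exact (hF b hb).1 (hbs ▸ hAS hs)
  refine ⟨P ++ ([[s]] ++ Q), ?_⟩
  have hPQ := hP.of_diff_compl.append ((bePartOn_singleton (hAS hs)).append hQ hsQ)
    (hX ▸ disjoint_compl_left)
  rwa [← hX, compl_union_self] at hPQ
end

section
/- Let D be a digraph such that every proper induced subdigraph of D satisfies the α-property, and let S be a maximum stable set of D. If there is no matching between S and N(S) covering S, then D has an S-path partition. -/
open Set

/-
If no matching covers `S`, Hall's theorem gives a nonempty `S' ⊆ S` with `|N(S')| < |S'|`,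
and a ⊆-minimal such `S'` admits a matching of `N(S')` into `S'`. Matched pairs and the
unmatched vertices of `S'` cover `S' ∪ N(S')` by paths of length at most one, each through
exactly one vertex of `S`. The rest of `D` is a proper induced subdigraph in which `S \ S'` is
still a maximum stable set (a larger one together with `S'` would beat `S`), so it has an
`(S \ S')`-path partition by hypothesis, and the two partitions together form an `S`-path
partition of `D`.
-/

open Set Function
open scoped SetRel

namespace SetRel

variable {α β : Type*}

theorem exists_injective_of_forall_ncard_le_ncard_image [Finite β] (R : SetRel α β)
    (X : Set α) (hall : ∀ T ⊆ X, T.ncard ≤ (R.image T).ncard) :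
    ∃ f : X → β, Injective f ∧ ∀ a, ↑a ~[R] f a := by
  classical
  have := Fintype.ofFinite β
  refine (Fintype.all_card_le_filter_rel_iff_exists_injective
    (fun (a : X) b => ↑a ~[R] b)).1 fun A => ?_
  have hcard := hall (A.map (Embedding.subtype _)) (by simp)
  rw [ncard_coe_finset, Finset.card_map] at hcard
  convert hcard using 1
  rw [← ncard_coe_finset]
  congr 1
  ext b
  simp

theorem exists_injective_image_of_not_exists_injective [Finite α] [Finite β]
    (R : SetRel α β) (X : Set α)
    (h : ¬ ∃ f : X → β, Injective f ∧ ∀ a, ↑a ~[R] f a) :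
    ∃ X' ⊆ X, X'.Nonempty ∧
      ∃ g : R.image X' → α, Injective g ∧ ∀ b, g b ∈ X' ∧ g b ~[R] ↑b := by
  obtain ⟨T, hTX, hT⟩ : ∃ T ⊆ X, (R.image T).ncard < T.ncard := by
    by_contra! hall
    exact h (R.exists_injective_of_forall_ncard_le_ncard_image X hall)
  -- A ⊆-minimal Hall violator satisfies Hall's condition in the reverse direction: a set `U`
  -- of its neighbours with too few neighbours `B` in it would leave the smaller violator `X' \ B`.
  obtain ⟨X', hX'T, hviol, hmin⟩ :=
    exists_minimal_le_of_wellFoundedLT (fun T => (R.image T).ncard < T.ncard) T hT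
  refine ⟨X', hX'T.trans hTX, nonempty_of_ncard_ne_zero (by omega), ?_⟩
  let R' : SetRel β α := {p | p.2 ∈ X' ∧ p.2 ~[R] p.1}
  suffices hall : ∀ U ⊆ R.image X', U.ncard ≤ (R'.image U).ncard from
    R'.exists_injective_of_forall_ncard_le_ncard_image _ hall
  intro U hU
  by_contra! hlt
  set B := R'.image U
  have hBX' : B ⊆ X' := fun a ⟨_, _, ha, _⟩ => ha
  have hB : B.Nonempty := by
    obtain ⟨b, hb⟩ := nonempty_of_ncard_ne_zero (s := U) (by omega)
    obtain ⟨a, ha, hab⟩ := hU hb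
    exact ⟨a, b, hb, ha, hab⟩
  have himage : R.image (X' \ B) ⊆ R.image X' \ U := fun b ⟨a, ⟨ha, haB⟩, hab⟩ =>
    ⟨⟨a, ha, hab⟩, fun hb => haB ⟨b, hb, ha, hab⟩⟩
  have hviol' : (R.image (X' \ B)).ncard < (X' \ B).ncard := calc
    (R.image (X' \ B)).ncard ≤ (R.image X' \ U).ncard := ncard_le_ncard himage (toFinite _)
    _ = (R.image X').ncard - U.ncard := ncard_sdiff hU
    _ < X'.ncard - B.ncard := by
      have := ncard_le_ncard hU (toFinite _); omega
    _ = (X' \ B).ncard := (ncard_sdiff hBX').symm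
  exact (hBX'.sdiff_ssubset_of_nonempty hB).2 (hmin hviol' sdiff_subset)

end SetRel

namespace Paper

variable {V : Type*} {E : V → V → Prop}

lemma exists_isPath_perm_pair {u v : V} (h : Adj E u v) :
    ∃ p, IsPath E p ∧ p.Perm [u, v] := by
  rcases h with huv | hvu
  · exact ⟨[u, v], ⟨by simp, List.isChain_pair.2 huv⟩, .refl _⟩
  · exact ⟨[v, u], ⟨by simp, List.isChain_pair.2 hvu⟩, .swap _ _ _⟩

lemma SPartOn.append {W₁ W₂ S : Set V} {P Q : List (List V)} (hP : SPartOn E W₁ S P)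
    (hQ : SPartOn E W₂ S Q) (hW : Disjoint W₁ W₂) : SPartOn E (W₁ ∪ W₂) S (P ++ Q) := by
  obtain ⟨⟨hPpath, hPnodup, hPmem⟩, hPorth⟩ := hP
  obtain ⟨⟨hQpath, hQnodup, hQmem⟩, hQorth⟩ := hQ
  refine ⟨⟨?_, ?_, ?_⟩, ?_⟩
  · simpa [or_imp, forall_and] using ⟨hPpath, hQpath⟩
  · rw [List.flatten_append, List.nodup_append]
    exact ⟨hPnodup, hQnodup, fun v hvP w hvQ hvw =>
      disjoint_left.1 hW ((hPmem v).1 hvP) ((hQmem v).1 (hvw ▸ hvQ))⟩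
  · simp [hPmem, hQmem]
  · intro p hp
    rcases List.mem_append.1 hp with hp | hp
    exacts [hPorth p hp, hQorth p hp]

lemma SPartOn.congr_stable {W S T : Set V} {P : List (List V)} (hP : SPartOn E W S P)
    (hST : ∀ v ∈ W, v ∈ S ↔ v ∈ T) : SPartOn E W T P := by
  refine ⟨hP.1, fun p hp => ?_⟩
  have hpW : ∀ v ∈ p, v ∈ W := fun v hv => (hP.1.2.2 v).1 (List.mem_flatten.2 ⟨p, hp, hv⟩)
  obtain ⟨v, ⟨hvp, hvS⟩, huniq⟩ := hP.2 p hp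
  exact ⟨v, ⟨hvp, (hST v (hpW v hvp)).1 hvS⟩,
    fun w ⟨hwp, hwT⟩ => huniq w ⟨hwp, (hST w (hpW w hwp)).2 hwT⟩⟩

lemma exists_sPartOn_of_subset [Finite V] {A S : Set V} (hAS : A ⊆ S) :
    ∃ P, SPartOn E A S P := by
  refine ⟨A.toFinite.toFinset.toList.map fun v => [v], ⟨⟨?_, ?_, ?_⟩, ?_⟩⟩
  · simp only [List.mem_map, forall_exists_index, and_imp]
    rintro _ v _ rfl
    exact ⟨List.cons_ne_nil _ _, List.isChain_singleton v⟩
  · rw [List.nodup_flatten, List.pairwise_map]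
    exact ⟨by simp, (Finset.nodup_toList _).imp fun h => by simpa [eq_comm] using h⟩
  · intro v
    simp only [List.mem_flatten, List.mem_map, Finset.mem_toList, Set.Finite.mem_toFinset]
    constructor
    · rintro ⟨_, ⟨w, hw, rfl⟩, hv⟩
      exact List.mem_singleton.1 hv ▸ hw
    · exact fun hv => ⟨[v], ⟨v, hv, rfl⟩, List.mem_singleton_self v⟩
  · intro _ hp
    obtain ⟨v, hv, rfl⟩ := List.mem_map.1 hp
    rw [Finset.mem_toList, Set.Finite.mem_toFinset] at hv
    exact ⟨v, ⟨List.mem_singleton_self v, hAS hv⟩, fun w hw => List.mem_singleton.1 hw.1⟩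

lemma exists_sPartOn_range_union [Finite V] {X Y : Set V} (hXY : Disjoint X Y) (g : Y → V)
    (hg : Injective g) (hgX : ∀ y, g y ∈ X) (hadj : ∀ y, Adj E (g y) y) :
    ∃ P, SPartOn E (range g ∪ Y) X P := by
  classical
  have := Fintype.ofFinite Y
  choose p hpath hperm using fun y => exists_isPath_perm_pair (hadj y)
  have hmem : ∀ y v, v ∈ p y ↔ v = g y ∨ v = y := fun y v => by simp [(hperm y).mem_iff]
  have hne : ∀ y : Y, g y ≠ y := fun y h => disjoint_left.1 hXY (hgX y) (h ▸ y.2)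
  refine ⟨Finset.univ.toList.map p, ⟨⟨?_, ?_, ?_⟩, ?_⟩⟩
  · simp only [List.mem_map, forall_exists_index, and_imp]
    rintro _ y _ rfl
    exact hpath y
  · rw [List.nodup_flatten, List.pairwise_map]
    refine ⟨?_, ?_⟩
    · simp only [List.mem_map, forall_exists_index, and_imp]
      rintro _ y _ rfl
      simpa [(hperm y).nodup_iff] using hne y
    refine (Finset.nodup_toList _).imp fun {a b} hab => List.disjoint_left.2 fun {v} hva hvb => ?_
    rw [hmem] at hva hvb
    rcases hva with rfl | rfl <;> rcases hvb with h | h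
    · exact hab (hg h)
    · exact disjoint_left.1 hXY (hgX a) (h ▸ b.2)
    · exact disjoint_left.1 hXY (hgX b) (h ▸ a.2)
    · exact hab (Subtype.ext h)
  · intro v
    simp [hmem, exists_or, eq_comm]
  · intro q hq
    simp only [List.mem_map, Finset.mem_toList, Finset.mem_univ, true_and] at hq
    obtain ⟨y, rfl⟩ := hq
    refine ⟨g y, ⟨(hmem _ _).2 (.inl rfl), hgX y⟩, fun v ⟨hv, hvX⟩ => ?_⟩
    rcases (hmem _ _).1 hv with rfl | rfl
    · rfl
    · exact absurd hvX (disjoint_right.1 hXY y.2)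

lemma exists_sPartOn_union [Finite V] {X Y : Set V} (hXY : Disjoint X Y) (g : Y → V)
    (hg : Injective g) (hgX : ∀ y, g y ∈ X) (hadj : ∀ y, Adj E (g y) y) :
    ∃ P, SPartOn E (X ∪ Y) X P := by
  obtain ⟨P, hP⟩ := exists_sPartOn_range_union hXY g hg hgX hadj
  obtain ⟨Q, hQ⟩ := exists_sPartOn_of_subset (E := E) (sdiff_subset : X \ range g ⊆ X)
  have hdisj : Disjoint (range g ∪ Y) (X \ range g) :=
    disjoint_union_left.2 ⟨disjoint_sdiff_right, hXY.symm.mono_right sdiff_subset⟩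
  have hunion : range g ∪ Y ∪ (X \ range g) = X ∪ Y := by
    have hsub : range g ⊆ X := range_subset_iff.2 hgX
    ext v
    have := @hsub v
    simp only [mem_union, mem_sdiff]
    tauto
  exact ⟨P ++ Q, hunion ▸ hP.append hQ hdisj⟩

lemma MaxStableOn.sdiff [Finite V] {U S S' N : Set V} (hS : MaxStableOn E U S) (hS' : S' ⊆ S)
    (hN : ∀ s ∈ S', ∀ v ∈ U, v ∉ S → Adj E s v → v ∈ N) (hNS : Disjoint N S) :
    MaxStableOn E (U \ (S' ∪ N)) (S \ S') := by
  obtain ⟨⟨hSU, hSst⟩, hmax⟩ := hS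
  refine ⟨⟨fun v hv => ⟨hSU hv.1, ?_⟩, fun u hu v hv => hSst u hu.1 v hv.1⟩, ?_⟩
  · rintro (h | h)
    exacts [hv.2 h, disjoint_left.1 hNS h hv.1]
  rintro T ⟨hTW, hTst⟩
  have hcross : ∀ t ∈ T, ∀ s ∈ S', ¬ Adj E s t := fun t ht s hs hst => by
    obtain ⟨htU, htS'N⟩ := hTW ht
    by_cases htS : t ∈ S
    · exact hSst s (hS' hs) t htS (fun h => htS'N (.inl (h ▸ hs))) hst
    · exact htS'N (.inr (hN s hs t htU htS hst))
  have hstable : Stable E (T ∪ S') := by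
    rintro u (hu | hu) v (hv | hv) huv
    · exact hTst u hu v hv huv
    · exact fun h => hcross u hu v hv h.symm
    · exact hcross v hv u hu
    · exact hSst u (hS' hu) v (hS' hv) huv
  have hdisj : Disjoint T S' := disjoint_left.2 fun t ht hs => (hTW ht).2 (.inl hs)
  have hle := hmax (T ∪ S') ⟨union_subset (fun t ht => (hTW ht).1) (hS'.trans hSU), hstable⟩
  rw [ncard_union_eq hdisj] at hle
  rw [ncard_sdiff hS']
  have := ncard_le_ncard hS'
  omega

lemma exists_matching_covers_of_injective {S : Set V} (f : S → V) (hf : Injective f)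
    (hfS : ∀ s, f s ∉ S ∧ Adj E s (f s)) :
    ∃ M, MatchingBetween (Adj E) S (Nbhd E S) M ∧ Covers M S := by
  refine ⟨range fun s : S => ((s : V), f s), ⟨?_, ?_⟩,
    fun x hx => ⟨(x, f ⟨x, hx⟩), ⟨⟨x, hx⟩, rfl⟩, .inl rfl⟩⟩
  · rintro _ ⟨s, rfl⟩
    exact ⟨s.2, ⟨(hfS s).1, ↑s, s.2, (hfS s).2⟩, (hfS s).2⟩
  · rintro _ ⟨s, rfl⟩ _ ⟨t, rfl⟩ hst
    have hst' : s ≠ t := fun h => hst (h ▸ rfl)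
    exact ⟨fun h => hst' (Subtype.ext h), fun h : (s : V) = f t => (hfS t).1 (h ▸ s.2),
      fun h : f s = t => (hfS s).1 (h ▸ t.2), fun h => hst' (hf h)⟩

end Paper

open Paper in
theorem stmt4 {V : Type*} [Fintype V] (E : V → V → Prop) (S : Set V)
    (hind : ∀ W : Set V, W ≠ Set.univ → AlphaPropOn E W)
    (hS : MaxStableOn E Set.univ S)
    (hno : ¬ ∃ M, MatchingBetween (Adj E) S (Nbhd E S) M ∧ Covers M S) :
    ∃ P, SPartOn E Set.univ S P := by
  let R : SetRel V V := {p | p.2 ∉ S ∧ Adj E p.1 p.2}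
  obtain ⟨S', hS'S, ⟨s, hs⟩, g, hg, hgS'⟩ :=
    R.exists_injective_image_of_not_exists_injective S
      fun ⟨f, hf, hfR⟩ => hno (exists_matching_covers_of_injective f hf hfR)
  have hNS : Disjoint (R.image S') S := disjoint_left.2 fun v ⟨_, _, hvS, _⟩ => hvS
  obtain ⟨Q, hQ⟩ := exists_sPartOn_union (hNS.mono_right hS'S).symm g hg
    (fun b => (hgS' b).1) (fun b => (hgS' b).2.2)
  obtain ⟨P, hP⟩ := hind (univ \ (S' ∪ R.image S'))
    ((ne_univ_iff_exists_notMem _).2 ⟨s, fun h => h.2 (.inl hs)⟩) (S \ S')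
    (hS.sdiff hS'S (fun s hs v _ hvS hsv => ⟨s, hs, hvS, hsv⟩) hNS)
  have hPS : SPartOn E (univ \ (S' ∪ R.image S')) S P :=
    hP.congr_stable fun v hv => ⟨And.left, fun h => ⟨h, fun h' => hv.2 (.inl h')⟩⟩
  have hQS : SPartOn E (S' ∪ R.image S') S Q :=
    hQ.congr_stable fun v hv =>
      ⟨(hS'S ·), fun h => hv.resolve_right fun hN => disjoint_left.1 hNS hN h⟩
  refine ⟨P ++ Q, ?_⟩
  simpa using hPS.append hQS disjoint_sdiff_left
end

section
/- Let D be a digraph such that every proper induced subdigraph of D satisfies the BE-property. If α(D) ≥ |V(D)|/2, then D satisfies the BE-property. -/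
/-!
Let `S` be a maximum stable set of `D`. It suffices to find a path `q` containing exactly one
vertex `s` of `S`, at one of its ends, that meets every maximum stable set: then `S \ {s}` is a
maximum stable set of `D - q`, and `q` together with a BE-partition of `D - q` for `S \ {s}` is a
BE-partition of `D` for `S`. If some `A ⊆ S` has `|N(A)| < |A|`, a vertex of a smallest such `A`
is such a path. Otherwise Hall's theorem matches `S` into `V \ S` by some `f`; since
`|V \ S| ≤ |S|`, no stable set avoiding both `s` and `f s` is as large as `S`, and the edge
between them gives the path.
-/

open Set

namespace Paper

variable {V : Type*} {E : V → V → Prop}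

theorem Stable.subset {S T : Set V} (hT : Stable E T) (h : S ⊆ T) : Stable E S :=
  fun u hu v hv => hT u (h hu) v (h hv)

theorem Stable.sdiff_nbhd_union {I T : Set V} (hI : Stable E I) (hT : Stable E T) :
    Stable E (T \ Nbhd E I ∪ I) := by
  rintro u (⟨huT, huN⟩ | huI) v (⟨hvT, hvN⟩ | hvI) huv hadj
  · exact hT u huT v hvT huv hadj
  · by_cases huI : u ∈ I
    · exact hI u huI v hvI huv hadj
    · exact huN ⟨huI, v, hvI, hadj.symm⟩
  · by_cases hvI : v ∈ I
    · exact hI u huI v hvI huv hadj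
    · exact hvN ⟨hvI, u, huI, hadj⟩
  · exact hI u huI v hvI huv hadj

theorem nbhd_inter_subset {I T : Set V} (hI : Stable E I) (hT : Stable E T) :
    Nbhd E (I ∩ T) ⊆ Nbhd E I \ T := by
  rintro v ⟨hv, u, ⟨huI, huT⟩, hadj⟩
  have huv : u ≠ v := by
    rintro rfl
    exact hv ⟨huI, huT⟩
  exact ⟨⟨fun hvI => hI u huI v hvI huv hadj, u, huI, hadj⟩,
    fun hvT => hT u huT v hvT huv hadj⟩

section Finite

variable [Finite V]

/-- `|I| - |N(I)| ≤ |I ∩ T| - |N(I ∩ T)|`, by comparing `T` with the stable set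
`(T \ N(I)) ∪ I`. -/
theorem ncard_add_ncard_nbhd_inter_le {I T : Set V} (hI : Stable E I)
    (hT : MaxStableOn E univ T) :
    I.ncard + (Nbhd E (I ∩ T)).ncard ≤ (I ∩ T).ncard + (Nbhd E I).ncard := by
  have hJ : (T \ Nbhd E I).ncard + (I \ T).ncard ≤ T.ncard :=
    calc (T \ Nbhd E I).ncard + (I \ T).ncard = (T \ Nbhd E I ∪ I \ T).ncard :=
          (ncard_union_eq (disjoint_sdiff_right.mono_left sdiff_subset)).symm
      _ ≤ (T \ Nbhd E I ∪ I).ncard := ncard_le_ncard (union_subset_union_right _ sdiff_subset)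
      _ ≤ T.ncard := hT.2 _ ⟨subset_univ _, hI.sdiff_nbhd_union hT.1.2⟩
  have hN := ncard_le_ncard (nbhd_inter_subset hI hT.1.2)
  have hIT := ncard_inter_add_ncard_sdiff_eq_ncard I T
  have hTN := ncard_inter_add_ncard_sdiff_eq_ncard T (Nbhd E I)
  have hNT := ncard_inter_add_ncard_sdiff_eq_ncard (Nbhd E I) T
  rw [inter_comm] at hNT
  omega

/-- A smallest `A ⊆ S` with `|N(A)| < |A|` lies in every maximum stable set `T`, since `A ∩ T`
is another one. -/
theorem exists_mem_forall_maxStableOn {S : Set V} (hS : Stable E S)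
    (h : ∃ A ⊆ S, (Nbhd E A).ncard < A.ncard) :
    ∃ s ∈ S, ∀ T, MaxStableOn E univ T → s ∈ T := by
  obtain ⟨A, ⟨hAS, hA⟩, hmin⟩ := exists_minimalFor_of_wellFoundedLT
    (fun A => A ⊆ S ∧ (Nbhd E A).ncard < A.ncard) ncard h
  obtain ⟨s, hs⟩ := nonempty_of_ncard_ne_zero (by omega : A.ncard ≠ 0)
  refine ⟨s, hAS hs, fun T hT => by_contra fun hsT => ?_⟩
  have hlt : (A ∩ T).ncard < A.ncard :=
    ncard_lt_ncard (inter_subset_left.ssubset_of_not_subset fun h => hsT (h hs).2)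
  have hexch := ncard_add_ncard_nbhd_inter_le (hS.subset hAS) hT
  have := hmin ⟨inter_subset_left.trans hAS, by omega⟩ hlt.le
  omega

theorem exists_injOn_adj_compl {S : Set V} (hS : Stable E S)
    (hHall : ∀ A ⊆ S, A.ncard ≤ (Nbhd E A).ncard) :
    ∃ f : V → V, InjOn f S ∧ ∀ s ∈ S, f s ∉ S ∧ Adj E s (f s) := by
  classical
  have := Fintype.ofFinite V
  let t : S → Finset V := fun s => Finset.univ.filter fun v => v ∉ S ∧ Adj E s v
  obtain ⟨g, hg, hgt⟩ := (Finset.all_card_le_biUnion_card_iff_exists_injective t).1 fun B => by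
    have hsub : Nbhd E (Subtype.val '' (B : Set S)) ⊆ ↑(B.biUnion t) := by
      rintro v ⟨hv, _, ⟨u, huB, rfl⟩, hadj⟩
      have hvS : v ∉ S := fun hvS => hS u u.2 v hvS (fun h => hv ⟨u, huB, h⟩) hadj
      simpa [t] using ⟨hvS, u, ⟨u.2, huB⟩, hadj⟩
    calc B.card = (Subtype.val '' (B : Set S)).ncard := by
          rw [ncard_image_of_injective _ Subtype.val_injective, ncard_coe_finset]
      _ ≤ (Nbhd E (Subtype.val '' (B : Set S))).ncard :=
          hHall _ (by rintro _ ⟨u, -, rfl⟩; exact u.2)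
      _ ≤ (B.biUnion t).card := (ncard_le_ncard hsub).trans (ncard_coe_finset _).le
  refine ⟨fun v => if h : v ∈ S then g ⟨v, h⟩ else v, fun u hu v hv huv => ?_, fun s hs => ?_⟩
  · simp only [dif_pos hu, dif_pos hv] at huv
    exact congrArg Subtype.val (hg huv)
  · simpa [dif_pos hs, t] using hgt ⟨s, hs⟩

/-- `f '' insert s (T ∩ S)` and `T \ S` are disjoint subsets of `Sᶜ`. -/
theorem Stable.ncard_lt_of_notMem_of_map_notMem {S T : Set V} {f : V → V} {s : V}
    (hT : Stable E T) (hcompl : Sᶜ.ncard ≤ S.ncard) (hf : InjOn f S)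
    (hfS : ∀ s ∈ S, f s ∉ S ∧ Adj E s (f s)) (hs : s ∈ S) (hsT : s ∉ T) (hfsT : f s ∉ T) :
    T.ncard < S.ncard := by
  have hsub : insert s (T ∩ S) ⊆ S := insert_subset hs inter_subset_right
  set M := f '' insert s (T ∩ S)
  have hM : M.ncard = (T ∩ S).ncard + 1 := by
    rw [(hf.mono hsub).ncard_image, ncard_insert_of_notMem fun h => hsT h.1]
  have hdisj : Disjoint M (T \ S) := by
    rw [disjoint_left]
    rintro _ ⟨a, ha, rfl⟩ ⟨hfaT, -⟩
    rcases ha with rfl | ⟨haT, haS⟩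
    · exact hfsT hfaT
    · exact hT a haT (f a) hfaT (fun h => (hfS a haS).1 (h ▸ haS)) (hfS a haS).2
  have hMS : M ∪ T \ S ⊆ Sᶜ :=
    union_subset (by rintro _ ⟨a, ha, rfl⟩; exact (hfS a (hsub ha)).1) fun v hv => hv.2
  have hle := ncard_le_ncard hMS
  rw [ncard_union_eq hdisj] at hle
  have := ncard_inter_add_ncard_sdiff_eq_ncard T S
  omega

end Finite

theorem MaxStableOn.sdiff_singleton_compl {S Q : Set V} {s : V}
    (hS : MaxStableOn E univ S) (hs : s ∈ S) (hSQ : ∀ v ∈ Q, v ∈ S → v = s)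
    (hQ : ∀ T, MaxStableOn E univ T → ∃ v ∈ T, v ∈ Q) :
    MaxStableOn E Qᶜ (S \ {s}) := by
  refine ⟨⟨fun v hv hvQ => hv.2 (hSQ v hvQ hv.1), hS.1.2.subset sdiff_subset⟩, fun T hT => ?_⟩
  have hlt : T.ncard < S.ncard := by
    refine (hS.2 T ⟨subset_univ T, hT.2⟩).lt_of_ne fun hTS => ?_
    obtain ⟨v, hvT, hvQ⟩ := hQ T ⟨⟨subset_univ T, hT.2⟩, fun T' hT' => hTS ▸ hS.2 T' hT'⟩
    exact hT.1 hvT hvQ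
  rw [ncard_sdiff_singleton_of_mem hs]
  omega

theorem exists_path_of_adj {s u : V} (h : Adj E s u) (hsu : s ≠ u) :
    ∃ q, IsPath E q ∧ q.Nodup ∧ (∀ v, v ∈ q ↔ v = s ∨ v = u) ∧
      (q.head? = some s ∨ q.getLast? = some s) := by
  rcases h with h | h
  · exact ⟨[s, u], ⟨by simp, List.isChain_pair.2 h⟩, by simp [hsu], by simp, Or.inl rfl⟩
  · exact ⟨[u, s], ⟨by simp, List.isChain_pair.2 h⟩, by simp [hsu.symm], by simp [or_comm],
      Or.inr rfl⟩

theorem bePartOn_nil_s6 [IsEmpty V] (W S : Set V) : BEPartOn E W S [] :=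
  ⟨⟨⟨by simp, by simp, fun v => isEmptyElim v⟩, by simp [Orthogonal]⟩, by simp⟩

theorem BEPartOn.cons {W S : Set V} {P : List (List V)} {q : List V} {s : V}
    (hP : BEPartOn E W S P) (hq : IsPath E q) (hqnd : q.Nodup) (hqW : ∀ v ∈ q, v ∉ W)
    (hsq : s ∈ q) (hend : q.head? = some s ∨ q.getLast? = some s)
    (hqS : ∀ v ∈ q, v ∈ S → v = s) :
    BEPartOn E (W ∪ {v | v ∈ q}) (insert s S) (q :: P) := by
  obtain ⟨⟨⟨hpaths, hnd, hcov⟩, horth⟩, hBE⟩ := hP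
  have hPW : ∀ p ∈ P, ∀ v ∈ p, v ∈ W := fun p hp v hv =>
    (hcov v).1 (List.mem_flatten.2 ⟨p, hp, hv⟩)
  have hPS : ∀ p ∈ P, ∀ v ∈ p, v ∈ insert s S → v ∈ S := fun p hp v hv hvS =>
    hvS.resolve_left fun hvs => hqW s hsq (hvs ▸ hPW p hp v hv)
  have hqS' : ∀ v ∈ q, v ∈ insert s S → v = s := fun v hv hvS => hvS.elim id (hqS v hv)
  refine ⟨⟨⟨List.forall_mem_cons.2 ⟨hq, hpaths⟩, ?_, fun v => ?_⟩, fun p hp => ?_⟩,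
    fun p hp v hv hvS => ?_⟩
  · rw [List.flatten_cons, List.nodup_append]
    exact ⟨hqnd, hnd, fun a haq b hbP hab => hqW a haq (hab ▸ (hcov b).1 hbP)⟩
  · simp [hcov, or_comm]
  · rcases List.mem_cons.1 hp with rfl | hp
    · exact ⟨s, ⟨hsq, mem_insert s S⟩, fun v hv => hqS' v hv.1 hv.2⟩
    · obtain ⟨w, hw, huniq⟩ := horth p hp
      exact ⟨w, ⟨hw.1, Or.inr hw.2⟩, fun v hv => huniq v ⟨hv.1, hPS p hp v hv.1 hv.2⟩⟩
  · rcases List.mem_cons.1 hp with rfl | hp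
    · exact hqS' v hv hvS ▸ hend
    · exact hBE p hp v hv (hPS p hp v hv hvS)

def IsSplittingPath (E : V → V → Prop) (S : Set V) (s : V) (q : List V) : Prop :=
  IsPath E q ∧ q.Nodup ∧ s ∈ q ∧ (q.head? = some s ∨ q.getLast? = some s) ∧
    (∀ v ∈ q, v ∈ S → v = s) ∧ ∀ T, MaxStableOn E univ T → ∃ v ∈ T, v ∈ q

theorem isSplittingPath_singleton {S : Set V} {s : V}
    (h : ∀ T, MaxStableOn E univ T → s ∈ T) : IsSplittingPath E S s [s] :=
  ⟨⟨List.cons_ne_nil _ _, List.isChain_singleton _⟩, List.nodup_singleton s,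
    List.mem_singleton_self s, Or.inl rfl, fun _ hv _ => List.mem_singleton.1 hv,
    fun T hT => ⟨s, h T hT, List.mem_singleton_self s⟩⟩

theorem exists_isSplittingPath_of_injOn [Finite V] {S : Set V} {f : V → V} {s : V}
    (hS : MaxStableOn E univ S) (hcompl : Sᶜ.ncard ≤ S.ncard) (hf : InjOn f S)
    (hfS : ∀ s ∈ S, f s ∉ S ∧ Adj E s (f s)) (hs : s ∈ S) :
    ∃ q, IsSplittingPath E S s q := by
  have hsf : s ≠ f s := fun h => (hfS s hs).1 (h ▸ hs)
  obtain ⟨q, hq, hqnd, hqmem, hend⟩ := exists_path_of_adj (hfS s hs).2 hsf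
  have hsq : s ∈ q := (hqmem s).2 (Or.inl rfl)
  have hfsq : f s ∈ q := (hqmem (f s)).2 (Or.inr rfl)
  refine ⟨q, hq, hqnd, hsq, hend, fun v hv hvS => ?_, fun T hT => ?_⟩
  · rcases (hqmem v).1 hv with rfl | rfl
    · rfl
    · exact absurd hvS (hfS s hs).1
  · by_contra! h
    exact (hT.1.2.ncard_lt_of_notMem_of_map_notMem hcompl hf hfS hs (h s · hsq)
      (h (f s) · hfsq)).ne ((hT.2 S hS.1).antisymm (hS.2 T hT.1)).symm

theorem exists_bePartOn_univ_of_isSplittingPath [Finite V] {S : Set V} {q : List V} {s : V}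
    (hind : ∀ W : Set V, W ≠ univ → BEPropOn E W) (hS : MaxStableOn E univ S) (hs : s ∈ S)
    (hq : IsSplittingPath E S s q) :
    ∃ P, BEPartOn E univ S P := by
  obtain ⟨hpath, hqnd, hsq, hend, hqS, hmeets⟩ := hq
  set Q : Set V := {v | v ∈ q}
  have hQ : Qᶜ ≠ univ := fun h => (h ▸ mem_univ s : s ∈ Qᶜ) hsq
  obtain ⟨P, hP⟩ := hind Qᶜ hQ _ (hS.sdiff_singleton_compl hs hqS hmeets)
  have hP' := hP.cons hpath hqnd (fun v hv hvQ => hvQ hv) hsq hend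
    fun v hv hvS => absurd (hqS v hv hvS.1) hvS.2
  rw [compl_union_self, insert_sdiff_singleton, insert_eq_of_mem hs] at hP'
  exact ⟨q :: P, hP'⟩

end Paper

open Paper in
theorem stmt6 {V : Type*} [Fintype V] (E : V → V → Prop)
    (hind : ∀ W : Set V, W ≠ Set.univ → BEPropOn E W)
    (halpha : ∃ S : Set V, StableOn E Set.univ S ∧ Fintype.card V ≤ 2 * S.ncard) :
    BEPropOn E Set.univ := by
  intro S hS
  obtain ⟨S₀, hS₀, hcard⟩ := halpha
  have hcompl : Sᶜ.ncard ≤ S.ncard := by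
    have := Set.ncard_add_ncard_compl S
    have := hS.2 S₀ hS₀
    rw [Nat.card_eq_fintype_card] at *
    omega
  rcases S.eq_empty_or_nonempty with rfl | ⟨s, hs⟩
  · have : IsEmpty V := Fintype.card_eq_zero_iff.1 (by simpa using hcompl)
    exact ⟨[], bePartOn_nil_s6 _ _⟩
  suffices ∃ s ∈ S, ∃ q, IsSplittingPath E S s q by
    obtain ⟨s, hs, q, hq⟩ := this
    exact exists_bePartOn_univ_of_isSplittingPath hind hS hs hq
  by_cases hdef : ∃ A ⊆ S, (Nbhd E A).ncard < A.ncard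
  · obtain ⟨a, ha, hcore⟩ := exists_mem_forall_maxStableOn hS.1.2 hdef
    exact ⟨a, ha, [a], isSplittingPath_singleton hcore⟩
  · push Not at hdef
    obtain ⟨f, hf, hfS⟩ := exists_injOn_adj_compl hS.1.2 hdef
    exact ⟨s, hs, exists_isSplittingPath_of_injOn hS hcompl hf hfS hs⟩
end

section
/- Every anti-directed odd cycle fails to satisfy the α-property; that is, if C is a digraph whose underlying graph is a cycle x₁x₂...x_{2k+1}x₁ with k ≥ 2 and each of the vertices x₁, x₂, x₃, x₄, x₆, x₈, ..., x_{2k} is either a source or a sink, then there exists a maximum stable set S of C for which no path partition of C is orthogonal to S. -/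
open Set

/-!
Take `S = {x₁, x₄, x₆, …, x_{2k}}`, a stable set of size `k`, hence maximum in a
`(2k+1)`-cycle. Every vertex outside `S` that is neither a source nor a sink has both its
neighbours in `S`, so a path orthogonal to `S` cannot pass through such a vertex and has at most
two vertices. An orthogonal path partition then has `k` paths covering at most `2k < 2k + 1`
vertices.
-/

theorem ZMod.val_add_one_cases {n : ℕ} [Fact (1 < n)] (v : ZMod n) :
    (v + 1).val = v.val + 1 ∨ (v.val + 1 = n ∧ (v + 1).val = 0) := by
  rcases Nat.lt_or_ge (v.val + 1) n with h | h
  · exact .inl (by rw [ZMod.val_add_of_lt (by rwa [ZMod.val_one]), ZMod.val_one])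
  · have h : v.val + 1 = n := le_antisymm (ZMod.val_lt v) h
    exact .inr ⟨h, by rw [ZMod.val_add, ZMod.val_one, h, Nat.mod_self]⟩

namespace Paper

section PathPartition

variable {V : Type*} {E : V → V → Prop} {S : Set V}

theorem length_le_two_of_existsUnique_mem
    (hmid : ∀ a b c, E a b → E b c → a ∈ S ∧ c ∈ S) {p : List V} (hp : p.IsChain E)
    (hnd : p.Nodup) (huniq : ∃! v, v ∈ p ∧ v ∈ S) : p.length ≤ 2 := by
  obtain _ | ⟨a, _ | ⟨b, _ | ⟨c, t⟩⟩⟩ := p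
  · simp
  · simp
  · simp
  obtain ⟨hab, hbc, -⟩ := List.isChain_cons_cons.1 hp |>.imp_right List.isChain_cons_cons.1
  have hac : a ≠ c := by simp_all
  obtain ⟨ha, hc⟩ := hmid a b c hab hbc
  exact absurd (huniq.unique ⟨by simp, ha⟩ ⟨by simp, hc⟩) hac

open Classical in
theorem length_flatten_le_two_mul_length_filter {P : List (List V)}
    (hP : ∀ p ∈ P, p.length ≤ 2 ∧ ∃ v ∈ p, v ∈ S) :
    P.flatten.length ≤ 2 * (P.flatten.filter (· ∈ S)).length := by
  induction P with
  | nil => simp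
  | cons p P ih =>
    obtain ⟨hlen, v, hv, hvS⟩ := hP p List.mem_cons_self
    have hpos : 0 < (p.filter (· ∈ S)).length :=
      List.length_pos_of_mem (List.mem_filter.2 ⟨hv, decide_eq_true hvS⟩)
    have := ih fun q hq => hP q (List.mem_cons_of_mem p hq)
    simp only [List.flatten_cons, List.filter_append, List.length_append]
    omega

theorem SPartOn.ncard_le_two_mul (hmid : ∀ a b c, E a b → E b c → a ∈ S ∧ c ∈ S)
    {W : Set V} {P : List (List V)} (hP : SPartOn E W S P) (hS : S.Finite) :
    W.ncard ≤ 2 * S.ncard := by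
  classical
  obtain ⟨⟨hpath, hnd, hcover⟩, horth⟩ := hP
  have hW : W = ↑P.flatten.toFinset := by ext v; simp [hcover]
  have hshort : ∀ p ∈ P, p.length ≤ 2 ∧ ∃ v ∈ p, v ∈ S := fun p hp =>
    ⟨length_le_two_of_existsUnique_mem hmid (hpath p hp).2
      ((List.nodup_flatten.1 hnd).1 p hp) (horth p hp), (horth p hp).exists⟩
  have hfilter : (P.flatten.filter (· ∈ S)).length ≤ S.ncard := by
    rw [← List.toFinset_card_of_nodup (hnd.filter _), ncard_eq_toFinset_card S hS]
    exact Finset.card_le_card fun v hv => by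
      simpa using (List.mem_filter.1 (List.mem_toFinset.1 hv)).2
  calc W.ncard = P.flatten.length := by
        rw [hW, ncard_coe_finset, List.toFinset_card_of_nodup hnd]
    _ ≤ 2 * (P.flatten.filter (· ∈ S)).length := length_flatten_le_two_mul_length_filter hshort
    _ ≤ 2 * S.ncard := by omega

end PathPartition

section Cycle

variable {n : ℕ} {E : ZMod n → ZMod n → Prop}

theorem stable_iff_forall_add_one_notMem [Fact (1 < n)]
    (hcyc : ∀ i j, Adj E i j ↔ (j = i + 1 ∨ i = j + 1)) {T : Set (ZMod n)} :
    Stable E T ↔ ∀ v ∈ T, v + 1 ∉ T := by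
  constructor
  · intro hT v hv hv1
    exact hT v hv (v + 1) hv1 (by simp) ((hcyc _ _).2 (.inl rfl))
  · rintro hT u hu v hv - huv
    rcases (hcyc u v).1 huv with rfl | rfl
    · exact hT u hu hv
    · exact hT v hv hu

theorem two_mul_ncard_le_of_stable [Fact (1 < n)]
    (hcyc : ∀ i j, Adj E i j ↔ (j = i + 1 ∨ i = j + 1)) {T : Set (ZMod n)}
    (hT : Stable E T) : 2 * T.ncard ≤ n := by
  have hdisj : Disjoint T ((· + 1) '' T) := by
    rw [disjoint_right]
    rintro _ ⟨v, hv, rfl⟩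
    exact (stable_iff_forall_add_one_notMem hcyc).1 hT v hv
  calc 2 * T.ncard = (T ∪ (· + 1) '' T).ncard := by
        rw [ncard_union_eq hdisj, ncard_image_of_injective _ (add_left_injective 1)]; ring
    _ ≤ (univ : Set (ZMod n)).ncard := ncard_le_ncard (subset_univ _)
    _ = n := by rw [ncard_univ, Nat.card_zmod]

end Cycle

section OddCycle

variable {k : ℕ}

/-- The paper's `{x₁, x₄, x₆, …, x_{2k}}`, vertex `v` standing for `x_{v+1}`. -/
def cycleStableSet (k : ℕ) : Set (ZMod (2 * k + 1)) :=
  {v | v.val = 0 ∨ (3 ≤ v.val ∧ v.val % 2 = 1)}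

variable [Fact (1 < 2 * k + 1)]

theorem stable_cycleStableSet {E : ZMod (2 * k + 1) → ZMod (2 * k + 1) → Prop}
    (hcyc : ∀ i j, Adj E i j ↔ (j = i + 1 ∨ i = j + 1)) : Stable E (cycleStableSet k) := by
  refine (stable_iff_forall_add_one_notMem hcyc).2 fun v hv hv1 => ?_
  simp only [cycleStableSet, mem_ofPred_eq] at hv hv1
  have : 1 < 2 * k + 1 := Fact.out
  rcases ZMod.val_add_one_cases v with h | h <;> omega

theorem le_ncard_cycleStableSet : k ≤ (cycleStableSet k).ncard := by
  set S := cycleStableSet k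
  have hcover : univ ⊆ S ∪ (· + 1) '' S ∪ {2} := by
    intro v _
    by_cases h2 : v.val = 2
    · right
      rw [mem_singleton_iff, ← ZMod.natCast_zmod_val v, h2, Nat.cast_ofNat]
    by_cases hv : v ∈ S
    · exact .inl (.inl hv)
    refine .inl (.inr ⟨v - 1, ?_, sub_add_cancel v 1⟩)
    simp only [S, cycleStableSet, mem_ofPred_eq] at hv ⊢
    have h := ZMod.val_add_one_cases (v - 1)
    rw [sub_add_cancel] at h
    omega
  have hcount : 2 * k + 1 ≤ S.ncard + S.ncard + 1 :=
    calc 2 * k + 1 = (univ : Set (ZMod (2 * k + 1))).ncard := by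
          rw [ncard_univ, Nat.card_zmod]
      _ ≤ (S ∪ (· + 1) '' S ∪ {2}).ncard := ncard_le_ncard hcover
      _ ≤ (S ∪ (· + 1) '' S).ncard + 1 := by grw [ncard_union_le, ncard_singleton]
      _ ≤ S.ncard + S.ncard + 1 := by
          grw [ncard_union_le, ncard_image_of_injective _ (add_left_injective 1)]
  omega

theorem mem_cycleStableSet_of_adj {b x : ZMod (2 * k + 1)} (hb : 4 ≤ b.val)
    (hb2 : b.val % 2 = 0) (hx : x = b + 1 ∨ b = x + 1) : x ∈ cycleStableSet k := by
  simp only [cycleStableSet, mem_ofPred_eq]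
  rcases hx with rfl | rfl
  · rcases ZMod.val_add_one_cases b with h | h <;> omega
  · rcases ZMod.val_add_one_cases x with h | h <;> omega

theorem mem_cycleStableSet_of_arc_arc {E : ZMod (2 * k + 1) → ZMod (2 * k + 1) → Prop}
    (hcyc : ∀ i j, Adj E i j ↔ (j = i + 1 ∨ i = j + 1))
    (hss : ∀ j : ℕ, 1 ≤ j → j ≤ 2 * k + 1 → (j ≤ 4 ∨ Even j) →
      (∀ u, ¬ E u ((j : ZMod (2 * k + 1)) - 1)) ∨
      (∀ u, ¬ E ((j : ZMod (2 * k + 1)) - 1) u))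
    {a b c : ZMod (2 * k + 1)} (hab : E a b) (hbc : E b c) :
    a ∈ cycleStableSet k ∧ c ∈ cycleStableSet k := by
  have hb : 4 ≤ b.val ∧ b.val % 2 = 0 := by
    by_contra hb
    have hcast : ((b.val + 1 : ℕ) : ZMod (2 * k + 1)) - 1 = b := by
      rw [Nat.cast_add, Nat.cast_one, ZMod.natCast_zmod_val, add_sub_cancel_right]
    have := ZMod.val_lt b
    have hsrc := hss (b.val + 1) (by omega) (by omega)
      (by rw [Nat.even_add_one, Nat.even_iff]; omega)
    rw [hcast] at hsrc
    exact hsrc.elim (· a hab) (· c hbc)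
  exact ⟨mem_cycleStableSet_of_adj hb.1 hb.2 ((hcyc b a).1 (.inr hab)),
    mem_cycleStableSet_of_adj hb.1 hb.2 ((hcyc b c).1 (.inl hbc))⟩

end OddCycle

end Paper

open Paper in
theorem stmt9 (k : ℕ) (hk : 2 ≤ k)
    (E : ZMod (2 * k + 1) → ZMod (2 * k + 1) → Prop)
    (hcyc : ∀ i j, Adj E i j ↔ (j = i + 1 ∨ i = j + 1))
    (hss : ∀ j : ℕ, 1 ≤ j → j ≤ 2 * k + 1 → (j ≤ 4 ∨ Even j) →
      (∀ u, ¬ E u ((j : ZMod (2 * k + 1)) - 1)) ∨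
      (∀ u, ¬ E ((j : ZMod (2 * k + 1)) - 1) u)) :
    ∃ S, MaxStableOn E Set.univ S ∧ ¬ ∃ P, SPartOn E Set.univ S P := by
  have : Fact (1 < 2 * k + 1) := ⟨by omega⟩
  have hS := stable_cycleStableSet hcyc
  have hsize : (cycleStableSet k).ncard = k := by
    have := two_mul_ncard_le_of_stable hcyc hS
    have := le_ncard_cycleStableSet (k := k)
    omega
  refine ⟨cycleStableSet k, ⟨⟨subset_univ _, hS⟩, fun T hT => ?_⟩, ?_⟩
  · have := two_mul_ncard_le_of_stable hcyc hT.2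
    omega
  · rintro ⟨P, hP⟩
    have := hP.ncard_le_two_mul
      (fun _ _ _ hab hbc => mem_cycleStableSet_of_arc_arc hcyc hss hab hbc) (toFinite _)
    rw [ncard_univ, Nat.card_zmod] at this
    omega
end

section
/- Every blocking odd cycle fails to satisfy the BE-property; that is, if C is a digraph whose underlying graph is a cycle x₁x₂...x_{2k+1}x₁ with k ≥ 1, where x₁ is a source and x₂ is a sink, then there exists a maximum stable set S of C admitting no path partition that is orthogonal to S and in which every vertex of S starts or ends its path. -/
open Set

/-!
Take for `S` the vertices `2, 4, …, 2k`, a maximum stable set. An orthogonal path partition has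
exactly `k` paths covering `2k + 1` vertices, so one path has three consecutive vertices
`x → y → z`. If every vertex of `S` ends its path, then `y ∉ S` and one of `x`, `z` is outside `S`
too; but the only adjacent pair outside `S` is `{0, 1}`, so `y` is the source `0` or the sink `1`,
and cannot be an inner vertex of a directed path.
-/

namespace Paper

section PathPartitions

variable {V : Type*} {E : V → V → Prop} {W S : Set V} {P : List (List V)}

theorem ncard_eq_length_of_nodup {l : List V} (hl : l.Nodup) (hS : ∀ v, v ∈ l ↔ v ∈ S) :
    S.ncard = l.length := by
  classical
  have hS_eq : S = ↑l.toFinset := by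
    ext v
    simp [hS]
  rw [hS_eq, Set.ncard_coe_finset, List.toFinset_card_of_nodup hl]

theorem countP_mem_eq_one [DecidablePred (· ∈ S)] {p : List V} (hp : p.Nodup)
    (h : ∃! v, v ∈ p ∧ v ∈ S) : p.countP (· ∈ S) = 1 := by
  obtain ⟨s, hs, huniq⟩ := h
  rw [List.countP_eq_length_filter, ← ncard_eq_length_of_nodup (hp.filter _) (S := {s}),
    Set.ncard_singleton]
  intro v
  simp only [List.mem_filter, decide_eq_true_eq, Set.mem_singleton_iff]
  exact ⟨huniq v, by rintro rfl; exact hs⟩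

theorem PathPartitionOn.length_eq_ncard (hP : PathPartitionOn E W P) (hS : Orthogonal S P)
    (hSW : S ⊆ W) : P.length = S.ncard := by
  classical
  obtain ⟨-, hnd, hcov⟩ := hP
  have hpaths_nodup : ∀ p ∈ P, p.Nodup := fun p hp => hnd.sublist (List.sublist_flatten_of_mem hp)
  calc P.length = (P.map fun p => p.countP (· ∈ S)).sum := by
        rw [List.map_congr_left fun p hp => countP_mem_eq_one (hpaths_nodup p hp) (hS p hp)]
        simp
    _ = P.flatten.countP (· ∈ S) := List.countP_flatten.symm
    _ = S.ncard := by
        rw [List.countP_eq_length_filter, ncard_eq_length_of_nodup (hnd.filter _)]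
        intro v
        simp only [List.mem_filter, decide_eq_true_eq, hcov]
        exact ⟨And.right, fun hv => ⟨hSW hv, hv⟩⟩

theorem PathPartitionOn.sum_length_eq_ncard (hP : PathPartitionOn E W P) :
    (P.map List.length).sum = W.ncard := by
  rw [← List.length_flatten, ncard_eq_length_of_nodup hP.2.1 fun v => hP.2.2 v]

theorem PathPartitionOn.exists_three_le_length (hP : PathPartitionOn E W P)
    (hS : Orthogonal S P) (hSW : S ⊆ W) (hcard : 2 * S.ncard < W.ncard) :
    ∃ p ∈ P, 3 ≤ p.length := by
  by_contra! hshort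
  have hsum := List.sum_le_card_nsmul (P.map List.length) 2 (by
    simp only [List.mem_map]
    rintro _ ⟨p, hp, rfl⟩
    exact Nat.le_of_lt_succ (hshort p hp))
  rw [hP.sum_length_eq_ncard, List.length_map, hP.length_eq_ncard hS hSW, smul_eq_mul] at hsum
  omega

theorem exists_arcs_of_three_le_length {p : List V} (hE : p.IsChain E) (hnd : p.Nodup)
    (horth : ∃! v, v ∈ p ∧ v ∈ S)
    (hend : ∀ v ∈ p, v ∈ S → p.head? = some v ∨ p.getLast? = some v) (hlen : 3 ≤ p.length) :
    ∃ x y z, E x y ∧ E y z ∧ y ∉ S ∧ (x ∉ S ∨ z ∉ S) := by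
  obtain ⟨a, b, c, t, rfl⟩ : ∃ a b c t, p = a :: b :: c :: t := by
    match p, hlen with
    | a :: b :: c :: t, _ => exact ⟨a, b, c, t, rfl⟩
  simp only [List.nodup_cons, List.mem_cons, not_or] at hnd
  obtain ⟨⟨hab, hac, -⟩, ⟨hbc, hbt⟩, -⟩ := hnd
  obtain ⟨hEab, hbct⟩ := List.isChain_cons_cons.mp hE
  have hEbc := (List.isChain_cons_cons.mp hbct).1
  refine ⟨a, b, c, hEab, hEbc, fun hb => ?_, ?_⟩
  · rcases hend b (by simp) hb with hhead | hlast
    · exact hab (Option.some_injective _ hhead)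
    · rw [List.getLast?_cons_cons, List.getLast?_cons_cons] at hlast
      rcases List.mem_cons.mp (List.mem_of_getLast? hlast) with rfl | hbt'
      · exact hbc rfl
      · exact hbt hbt'
  · by_contra! hS
    exact hac (horth.unique ⟨by simp, hS.1⟩ ⟨by simp, hS.2⟩)

theorem BEPartOn.exists_arcs (hP : BEPartOn E W S P) (hSW : S ⊆ W)
    (hcard : 2 * S.ncard < W.ncard) :
    ∃ x y z, E x y ∧ E y z ∧ y ∉ S ∧ (x ∉ S ∨ z ∉ S) := by
  obtain ⟨⟨hpart, horth⟩, hend⟩ := hP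
  obtain ⟨p, hp, hlen⟩ := hpart.exists_three_le_length horth hSW hcard
  exact exists_arcs_of_three_le_length (hpart.1 p hp).2
    (hpart.2.1.sublist (List.sublist_flatten_of_mem hp)) (horth p hp) (hend p hp) hlen

end PathPartitions

theorem two_mul_ncard_le_of_add_one_notMem {n : ℕ} [NeZero n] {T : Set (ZMod n)}
    (hT : ∀ u ∈ T, u + 1 ∉ T) : 2 * T.ncard ≤ n := by
  have hdisj : Disjoint T ((· + 1) '' T) := by
    rw [Set.disjoint_left]
    rintro _ hv ⟨u, hu, rfl⟩
    exact hT u hu hv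
  calc 2 * T.ncard = (T ∪ (· + 1) '' T).ncard := by
        rw [Set.ncard_union_eq hdisj, Set.ncard_image_of_injective _ (add_left_injective 1)]
        ring
    _ ≤ (Set.univ : Set (ZMod n)).ncard := Set.ncard_le_ncard (Set.subset_univ _)
    _ = n := by rw [Set.ncard_univ, Nat.card_zmod]

section OddCycle

variable {k : ℕ}

def evenVertices (k : ℕ) : Set (ZMod (2 * k + 1)) := {v | v.val ≠ 0 ∧ Even v.val}

theorem val_add_one_cases (hk : 1 ≤ k) (u : ZMod (2 * k + 1)) :
    (u.val = 2 * k ∧ (u + 1).val = 0) ∨ (u.val < 2 * k ∧ (u + 1).val = u.val + 1) := by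
  have : Fact (1 < 2 * k + 1) := ⟨by omega⟩
  have hlt := ZMod.val_lt u
  rw [ZMod.val_add, ZMod.val_one]
  rcases Nat.lt_or_ge (u.val + 1) (2 * k + 1) with h | h
  · exact Or.inr ⟨by omega, Nat.mod_eq_of_lt h⟩
  · exact Or.inl ⟨by omega, by rw [show u.val + 1 = 2 * k + 1 by omega, Nat.mod_self]⟩

theorem add_one_notMem_evenVertices (hk : 1 ≤ k) {u : ZMod (2 * k + 1)}
    (hu : u ∈ evenVertices k) : u + 1 ∉ evenVertices k := by
  simp only [evenVertices, Set.mem_ofPred_eq, Nat.even_iff] at hu ⊢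
  rcases val_add_one_cases hk u with ⟨-, h⟩ | ⟨-, h⟩ <;> omega

theorem eq_zero_of_notMem_evenVertices (hk : 1 ≤ k) {u : ZMod (2 * k + 1)}
    (hu : u ∉ evenVertices k) (hu' : u + 1 ∉ evenVertices k) : u = 0 := by
  simp only [evenVertices, Set.mem_ofPred_eq, Nat.even_iff, not_and_or, not_not] at hu hu'
  rw [← ZMod.val_eq_zero]
  rcases val_add_one_cases hk u with ⟨h, h'⟩ | ⟨h, h'⟩ <;> omega

theorem eq_zero_or_eq_one_of_notMem_evenVertices (hk : 1 ≤ k) {u v : ZMod (2 * k + 1)}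
    (huv : v = u + 1 ∨ u = v + 1) (hu : u ∉ evenVertices k) (hv : v ∉ evenVertices k) :
    u = 0 ∨ u = 1 := by
  rcases huv with rfl | rfl
  · exact Or.inl (eq_zero_of_notMem_evenVertices hk hu hv)
  · rw [eq_zero_of_notMem_evenVertices hk hv hu, zero_add]
    exact Or.inr rfl

theorem ncard_evenVertices : (evenVertices k).ncard = k := by
  refine (Set.ncard_congr (t := Set.Icc 1 k) (fun v _ => v.val / 2) ?_ ?_ ?_).trans (by simp)
  · rintro v ⟨hv0, hv2⟩
    have := ZMod.val_lt v
    rw [Nat.even_iff] at hv2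
    simp only [Set.mem_Icc]
    omega
  · rintro v w ⟨-, hv2⟩ ⟨-, hw2⟩ h
    rw [Nat.even_iff] at hv2 hw2
    exact ZMod.val_injective _ (by omega)
  · rintro i ⟨hi1, hik⟩
    have hval : ((2 * i : ℕ) : ZMod (2 * k + 1)).val = 2 * i := ZMod.val_natCast_of_lt (by omega)
    refine ⟨(2 * i : ℕ), ?_, by simp only [hval]; omega⟩
    simp only [evenVertices, Set.mem_ofPred_eq, hval]
    exact ⟨by omega, even_two_mul i⟩

variable {E : ZMod (2 * k + 1) → ZMod (2 * k + 1) → Prop}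

theorem stable_evenVertices (hk : 1 ≤ k) (hcyc : ∀ i j, Adj E i j ↔ (j = i + 1 ∨ i = j + 1)) :
    Stable E (evenVertices k) := by
  intro u hu v hv _ hadj
  rcases (hcyc u v).mp hadj with rfl | rfl
  · exact add_one_notMem_evenVertices hk hu hv
  · exact add_one_notMem_evenVertices hk hv hu

theorem ncard_le_of_stable (hk : 1 ≤ k) (hcyc : ∀ i j, Adj E i j ↔ (j = i + 1 ∨ i = j + 1))
    {T : Set (ZMod (2 * k + 1))} (hT : Stable E T) : T.ncard ≤ k := by
  have : Fact (1 < 2 * k + 1) := ⟨by omega⟩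
  have := two_mul_ncard_le_of_add_one_notMem fun u hu hu' =>
    hT u hu (u + 1) hu' (succ_ne_self u).symm ((hcyc u (u + 1)).mpr (Or.inl rfl))
  omega

end OddCycle

end Paper

open Paper in
theorem stmt10 (k : ℕ) (hk : 1 ≤ k)
    (E : ZMod (2 * k + 1) → ZMod (2 * k + 1) → Prop)
    (hcyc : ∀ i j, Adj E i j ↔ (j = i + 1 ∨ i = j + 1))
    (hsource : ∀ u, ¬ E u 0) (hsink : ∀ u, ¬ E 1 u) :
    ∃ S, MaxStableOn E Set.univ S ∧ ¬ ∃ P, BEPartOn E Set.univ S P := by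
  refine ⟨evenVertices k, ⟨⟨Set.subset_univ _, stable_evenVertices hk hcyc⟩, fun T hT => ?_⟩, ?_⟩
  · rw [ncard_evenVertices]
    exact ncard_le_of_stable hk hcyc hT.2
  rintro ⟨P, hP⟩
  obtain ⟨x, y, z, hxy, hyz, hy, hxz⟩ := hP.exists_arcs (Set.subset_univ _) (by
    rw [ncard_evenVertices, Set.ncard_univ, Nat.card_zmod]
    omega)
  have hy01 : y = 0 ∨ y = 1 := by
    rcases hxz with hx | hz
    · exact eq_zero_or_eq_one_of_notMem_evenVertices hk ((hcyc x y).mp (Or.inl hxy)).symm hy hx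
    · exact eq_zero_or_eq_one_of_notMem_evenVertices hk ((hcyc y z).mp (Or.inl hyz)) hy hz
  rcases hy01 with rfl | rfl
  · exact hsource x hxy
  · exact hsink z hyz
end

section
/- The transitive triangle (vertices v₁, v₂, v₃ with edges v₁v₂, v₁v₃, v₃v₂) does not satisfy the BE-property. -/
open Set

/-
Any two vertices of the transitive triangle are adjacent, so `{2}` is a maximum stable set.
Every path of a `{2}`-path partition passes through `2`, hence the partition is a single
Hamiltonian path; the only one is `0 → 2 → 1`, where `2` is an inner vertex.
-/

theorem List.Nodup.length_eq_card_of_forall_mem {α : Type*} [Fintype α] [DecidableEq α]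
    {l : List α} (hl : l.Nodup) (h : ∀ a, a ∈ l) : l.length = Fintype.card α := by
  rw [← List.toFinset_card_of_nodup hl, ← Finset.card_univ]
  exact congrArg Finset.card (Finset.eq_univ_of_forall (by simpa using h))

namespace Paper

variable {V : Type*} {E : V → V → Prop}

theorem Stable.subsingleton (hE : ∀ u v, u ≠ v → Adj E u v) {S : Set V} (hS : Stable E S) :
    S.Subsingleton := fun u hu v hv => by_contra fun huv => hS u hu v hv huv (hE u v huv)

theorem maxStableOn_singleton (hE : ∀ u v, u ≠ v → Adj E u v) {W : Set V} {v : V}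
    (hv : v ∈ W) : MaxStableOn E W {v} := by
  refine ⟨⟨singleton_subset_iff.mpr hv, fun a ha b hb hab => absurd (ha.trans hb.symm) hab⟩,
    fun T hT => ?_⟩
  have hT1 := hT.2.subsingleton hE
  rw [ncard_singleton, ncard_le_one hT1.finite]
  exact fun a ha b hb => hT1 ha hb

theorem PathPartitionOn.subset_of_orthogonal_singleton {W : Set V} {P : List (List V)}
    {s : V} {p : List V} (hP : PathPartitionOn E W P) (hS : Orthogonal {s} P) (hp : p ∈ P)
    (hsp : s ∈ p) : ∀ v ∈ W, v ∈ p := by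
  intro v hv
  obtain ⟨q, hq, hvq⟩ := List.mem_flatten.mp ((hP.2.2 v).mpr hv)
  obtain ⟨w, ⟨hwq, rfl⟩, -⟩ := hS q hq
  have : Std.Symm (α := List V) List.Disjoint := ⟨fun _ _ h => h.symm⟩
  obtain rfl : p = q := by
    by_contra hpq
    exact (List.nodup_flatten.mp hP.2.1).2.forall hp hq hpq hsp hwq
  exact hvq

def IsTransitiveTriangle (E : Fin 3 → Fin 3 → Prop) : Prop :=
  ∀ u v, E u v ↔ ((u, v) = ((0 : Fin 3), (1 : Fin 3)) ∨
    (u, v) = ((0 : Fin 3), (2 : Fin 3)) ∨ (u, v) = ((2 : Fin 3), (1 : Fin 3)))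

namespace IsTransitiveTriangle

variable {E : Fin 3 → Fin 3 → Prop}

theorem adj_of_ne (hE : IsTransitiveTriangle E) (u v : Fin 3) (huv : u ≠ v) : Adj E u v := by
  rw [Adj, hE, hE]
  fin_cases u <;> fin_cases v <;> simp_all

theorem eq_of_edge_edge (hE : IsTransitiveTriangle E) {a b c : Fin 3} (hab : E a b)
    (hbc : E b c) : a = 0 ∧ b = 2 ∧ c = 1 := by
  simp only [hE a b, hE b c, Prod.mk.injEq] at hab hbc
  omega

theorem eq_of_isPath_of_forall_mem (hE : IsTransitiveTriangle E) {p : List (Fin 3)}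
    (hp : IsPath E p) (hnd : p.Nodup) (hall : ∀ v, v ∈ p) : p = [0, 2, 1] := by
  obtain ⟨a, b, c, rfl⟩ := List.length_eq_three.mp (hnd.length_eq_card_of_forall_mem hall)
  have hchain : List.IsChain E [a, b, c] := hp.2
  obtain ⟨hab, hbc⟩ : E a b ∧ E b c := by simpa using hchain
  obtain ⟨rfl, rfl, rfl⟩ := hE.eq_of_edge_edge hab hbc
  rfl

end IsTransitiveTriangle

end Paper

open Paper in
theorem stmt11 (E : Fin 3 → Fin 3 → Prop)
    (hE : ∀ u v, E u v ↔ ((u, v) = ((0 : Fin 3), (1 : Fin 3)) ∨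
      (u, v) = ((0 : Fin 3), (2 : Fin 3)) ∨ (u, v) = ((2 : Fin 3), (1 : Fin 3)))) :
    ¬ BEPropOn E Set.univ := by
  have hT : IsTransitiveTriangle E := hE
  intro h
  obtain ⟨P, ⟨hP, horth⟩, hBE⟩ := h {2} (maxStableOn_singleton hT.adj_of_ne (mem_univ 2))
  obtain ⟨p, hpP, h2p⟩ := List.mem_flatten.mp ((hP.2.2 2).mpr (mem_univ 2))
  have hall : ∀ v, v ∈ p := fun v =>
    hP.subset_of_orthogonal_singleton horth hpP h2p v (mem_univ v)
  obtain rfl : p = [0, 2, 1] := hT.eq_of_isPath_of_forall_mem (hP.1 p hpP)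
    ((List.nodup_flatten.mp hP.2.1).1 p hpP) hall
  simpa using hBE _ hpP 2 h2p rfl
end
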